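/- arXiv:2109.03030 — 6 statements merged into one kernel-verified Lean document; each statement's English description precedes it below -/
import Mathlib

section
/- Let X be a simplicial complex on a finite vertex set V and let Y ⊆ X be a subcomplex. Suppose there exist a face σ ∈ X and subcomplexes W ⊆ Z ⊆ X[V∖σ] such that X∖Y = {η ∪ σ : η ∈ Z∖W}. Then the relative simplicial homology groups satisfy H_k(X,Y) ≅ H_{k−|σ|}(Z,W) for all k. -/
open Finset

variable {V : Type*} [DecidableEq V] [LinearOrder V] [Fintype V]

/-- A (possibly void) simplicial complex: a family of finite sets closed under subsets. -/
def IsComplex {V : Type*} [DecidableEq V] (K : Finset (Finset V)) : Prop :=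
  ∀ σ ∈ K, ∀ τ ⊆ σ, τ ∈ K

/-- The faces of `X` which are not faces of `Y` and have cardinality `j + 1`
(i.e. dimension `j`). -/
abbrev RelFace (X Y : Finset (Finset V)) (j : ℤ) : Type _ :=
  {σ : Finset V // σ ∈ X ∧ σ ∉ Y ∧ (σ.card : ℤ) = j + 1}

/-- The simplicial boundary operator from `i`-dimensional chains of the pair `(X, Y)` to
`j`-dimensional chains; it is the usual boundary operator when `j = i - 1`
(and the zero map otherwise). Signs are determined by the linear order on the vertices. -/
noncomputable def relBoundary (X Y : Finset (Finset V)) (i j : ℤ) :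
    (RelFace X Y i → ℝ) →ₗ[ℝ] (RelFace X Y j → ℝ) :=
  Matrix.mulVecLin fun (τ : RelFace X Y j) (σ : RelFace X Y i) =>
    ∑ v ∈ σ.1, if σ.1.erase v = τ.1 then (-1 : ℝ) ^ (σ.1.filter (· < v)).card else 0

/-- The `j`-th relative simplicial homology group (with ℝ coefficients) of the pair `(X, Y)`:
cycles modulo boundaries, in the chain complex generated by the simplices of `X` not in `Y`. -/
noncomputable abbrev relHomology (X Y : Finset (Finset V)) (j : ℤ) : Type _ :=
  LinearMap.ker (relBoundary X Y j (j - 1)) ⧸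
    Submodule.comap (LinearMap.ker (relBoundary X Y j (j - 1))).subtype
      (LinearMap.range (relBoundary X Y (j + 1) j))

/-- The `j`-th reduced simplicial homology group of `K`, with ℝ coefficients.
(The chain complex is augmented: the empty set is a face of dimension `-1`.) -/
noncomputable abbrev reducedHomology (K : Finset (Finset V)) (j : ℤ) : Type _ :=
  relHomology K ∅ j

/-- The subcomplex of `K` induced by the vertex set `U`. -/
def induced {V : Type*} [DecidableEq V] (K : Finset (Finset V)) (U : Finset V) :
    Finset (Finset V) :=
  K.filter fun σ => σ ⊆ U

/-- `K` is `d`-Leray: every induced subcomplex has trivial reduced homology in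
dimensions `d` and higher. -/
def IsLeray (d : ℕ) (K : Finset (Finset V)) : Prop :=
  ∀ (U : Finset V) (i : ℤ), (d : ℤ) ≤ i → Subsingleton (reducedHomology (induced K U) i)

/-- The complex is acyclic: all reduced homology groups vanish. -/
def IsAcyclic (K : Finset (Finset V)) : Prop :=
  ∀ i : ℤ, -1 ≤ i → Subsingleton (reducedHomology K i)

/-- The Leray number of `K`: the minimal `d` such that `K` is `d`-Leray. -/
noncomputable def lerayNumber (K : Finset (Finset V)) : ℕ :=
  sInf {d : ℕ | IsLeray d K}

/-- The link of a face `τ` in `K`. -/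
def link {V : Type*} [DecidableEq V] (K : Finset (Finset V)) (τ : Finset V) :
    Finset (Finset V) :=
  K.filter fun σ => σ ∩ τ = ∅ ∧ σ ∪ τ ∈ K

/-- The costar of a face `τ` in `K`: all faces not containing `τ`. -/
def costar {V : Type*} [DecidableEq V] (K : Finset (Finset V)) (τ : Finset V) :
    Finset (Finset V) :=
  K.filter fun σ => ¬ τ ⊆ σ

/-- `τ` is a maximal face of `K`. -/
def IsMaximalFace {V : Type*} [DecidableEq V] (K : Finset (Finset V)) (τ : Finset V) : Prop :=
  τ ∈ K ∧ ∀ ρ ∈ K, τ ⊆ ρ → ρ = τ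

/-- `σ` is a free face of `K`: it is contained in a unique maximal face of `K`. -/
def IsFreeFace {V : Type*} [DecidableEq V] (K : Finset (Finset V)) (σ : Finset V) : Prop :=
  σ ∈ K ∧ ∃! τ : Finset V, IsMaximalFace K τ ∧ σ ⊆ τ

/-- `K` is `d`-collapsible: it can be reduced to the void complex by repeatedly removing all
faces containing some free face of size at most `d` (an elementary `d`-collapse). -/
inductive Collapsible {V : Type*} [DecidableEq V] (d : ℕ) : Finset (Finset V) → Prop
  | void : Collapsible d ∅
  | step (K : Finset (Finset V)) (σ : Finset V) : IsFreeFace K σ → σ.card ≤ d →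
      Collapsible d (K.filter fun ρ => ¬ σ ⊆ ρ) → Collapsible d K

/-- The `t`-tolerance complex of `K`, with respect to the vertex set `A`:
all sets of the form `η ∪ τ` with `η ∈ K`, `τ ⊆ A` and `|τ| ≤ t`. -/
def tol {V : Type*} [DecidableEq V] (A : Finset V) (t : ℕ) (K : Finset (Finset V)) :
    Finset (Finset V) :=
  ((A.powerset.filter fun τ => τ.card ≤ t) ×ˢ K).image fun p => p.2 ∪ p.1

/-- `τ` is a missing face of `K`: it is not a face, but all its proper subsets are faces. -/
def IsMissingFace {V : Type*} [DecidableEq V] (K : Finset (Finset V)) (τ : Finset V) : Prop :=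
  τ ∉ K ∧ ∀ ρ ⊂ τ, ρ ∈ K


section Sign
variable {V : Type*} [DecidableEq V] [LinearOrder V] [Fintype V]

/-- Sign of a face relative to `σ`. -/
noncomputable def relSgn (σ η : Finset V) : ℝ :=
  (-1 : ℝ) ^ ∑ v ∈ η, ((σ.filter (· < v)).card)

lemma relSgn_mul_self (σ η : Finset V) : relSgn σ η * relSgn σ η = 1 := by
  rw [relSgn, ← pow_add, ← two_mul, pow_mul]
  norm_num

lemma relSgn_erase (σ η : Finset V) {v : V} (hv : v ∈ η) :
    relSgn σ η = relSgn σ (η.erase v) * (-1 : ℝ) ^ ((σ.filter (· < v)).card) := by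
  rw [relSgn, relSgn, ← pow_add, Finset.sum_erase_add η _ hv]

lemma entry_eq (σ ρ τ : Finset V) (hρ : Disjoint ρ σ) (hτ : Disjoint τ σ) :
    (∑ v ∈ ρ ∪ σ, if (ρ ∪ σ).erase v = τ ∪ σ
        then (-1 : ℝ) ^ (((ρ ∪ σ).filter (· < v)).card) else 0)
    = relSgn σ ρ * relSgn σ τ *
      ∑ v ∈ ρ, (if ρ.erase v = τ then (-1 : ℝ) ^ ((ρ.filter (· < v)).card) else 0) := by
  rw [Finset.sum_union hρ, Finset.mul_sum]
  have hσ0 : ∀ v ∈ σ, (if (ρ ∪ σ).erase v = τ ∪ σ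
      then (-1 : ℝ) ^ (((ρ ∪ σ).filter (· < v)).card) else 0) = 0 := by
    intro v hv
    rw [if_neg]
    intro h
    have : v ∈ (ρ ∪ σ).erase v := h ▸ (Finset.mem_union_right τ hv)
    exact (Finset.notMem_erase v _) this
  rw [Finset.sum_eq_zero hσ0, add_zero]
  apply Finset.sum_congr rfl
  intro v hv
  have hvσ : v ∉ σ := Finset.disjoint_left.1 hρ hv
  have herase : (ρ ∪ σ).erase v = ρ.erase v ∪ σ := by
    rw [Finset.erase_union_distrib, Finset.erase_eq_of_notMem hvσ]
  have hcond : ((ρ ∪ σ).erase v = τ ∪ σ) ↔ (ρ.erase v = τ) := by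
    rw [herase]
    constructor
    · intro h
      have h1 : Disjoint (ρ.erase v) σ := hρ.mono_left (Finset.erase_subset v ρ)
      calc ρ.erase v = (ρ.erase v ∪ σ) \ σ := (Finset.union_sdiff_cancel_right h1).symm
        _ = (τ ∪ σ) \ σ := by rw [h]
        _ = τ := Finset.union_sdiff_cancel_right hτ
    · intro h; rw [h]
  by_cases h : ρ.erase v = τ
  · rw [if_pos (hcond.2 h), if_pos h]
    have hfil : ((ρ ∪ σ).filter (· < v)).card
        = (ρ.filter (· < v)).card + (σ.filter (· < v)).card := by
      rw [Finset.filter_union, Finset.card_union_of_disjoint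
        (hρ.mono (Finset.filter_subset _ _) (Finset.filter_subset _ _))]
    have hsgn : relSgn σ ρ * relSgn σ τ = (-1 : ℝ) ^ ((σ.filter (· < v)).card) := by
      rw [relSgn_erase σ ρ hv, h, mul_comm (relSgn σ τ) _, mul_assoc, relSgn_mul_self, mul_one]
    rw [hfil, pow_add, hsgn]
    ring
  · rw [if_neg (fun hh => h (hcond.1 hh)), if_neg h, mul_zero]

end Sign

section FaceEquiv
variable {V : Type*} [DecidableEq V] [LinearOrder V] [Fintype V]
variable (X Y Z W : Finset (Finset V)) (σ : Finset V)

/-- The bijection between relative faces of `(X,Y)` and relative faces of `(Z,W)`. -/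
def faceEquiv
    (hmem : ∀ τ : Finset V, (τ ∈ X ∧ τ ∉ Y) ↔ ∃ η, (η ∈ Z ∧ η ∉ W) ∧ τ = η ∪ σ)
    (hdisj : ∀ η ∈ Z, Disjoint η σ) (k k' : ℤ) (hk : k = k' + σ.card) :
    RelFace X Y k ≃ RelFace Z W k' where
  toFun τ := ⟨τ.1 \ σ, by
    obtain ⟨η, ⟨hηZ, hηW⟩, hτ⟩ := (hmem τ.1).1 ⟨τ.2.1, τ.2.2.1⟩
    have hd := hdisj η hηZ
    have hds : τ.1 \ σ = η := by rw [hτ, Finset.union_sdiff_cancel_right hd]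
    refine ⟨hds ▸ hηZ, hds ▸ hηW, ?_⟩
    have hcard := τ.2.2.2
    rw [hτ, Finset.card_union_of_disjoint hd] at hcard
    rw [hds]
    push_cast at hcard ⊢
    omega⟩
  invFun η := ⟨η.1 ∪ σ, by
    refine ⟨((hmem _).2 ⟨η.1, ⟨η.2.1, η.2.2.1⟩, rfl⟩).1,
      ((hmem _).2 ⟨η.1, ⟨η.2.1, η.2.2.1⟩, rfl⟩).2, ?_⟩
    rw [Finset.card_union_of_disjoint (hdisj η.1 η.2.1)]
    have := η.2.2.2
    push_cast
    omega⟩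
  left_inv τ := by
    apply Subtype.ext
    obtain ⟨η, ⟨hηZ, hηW⟩, hτ⟩ := (hmem τ.1).1 ⟨τ.2.1, τ.2.2.1⟩
    have hsub : σ ⊆ τ.1 := hτ ▸ Finset.subset_union_right
    exact Finset.sdiff_union_of_subset hsub
  right_inv η := by
    apply Subtype.ext
    exact Finset.union_sdiff_cancel_right (hdisj η.1 η.2.1)

/-- The chain-level equivalence, with signs. -/
noncomputable def chainEquiv
    (hmem : ∀ τ : Finset V, (τ ∈ X ∧ τ ∉ Y) ↔ ∃ η, (η ∈ Z ∧ η ∉ W) ∧ τ = η ∪ σ)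
    (hdisj : ∀ η ∈ Z, Disjoint η σ) (k k' : ℤ) (hk : k = k' + σ.card) :
    (RelFace X Y k → ℝ) ≃ₗ[ℝ] (RelFace Z W k' → ℝ) where
  toFun x η := relSgn σ η.1 * x ((faceEquiv X Y Z W σ hmem hdisj k k' hk).symm η)
  invFun y τ := relSgn σ ((faceEquiv X Y Z W σ hmem hdisj k k' hk) τ).1
      * y ((faceEquiv X Y Z W σ hmem hdisj k k' hk) τ)
  map_add' x y := by funext η; simp [mul_add]
  map_smul' c x := by funext η; simp [mul_comm, mul_assoc, mul_left_comm]
  left_inv x := by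
    funext τ
    simp only [Equiv.symm_apply_apply]
    rw [← mul_assoc, relSgn_mul_self, one_mul]
  right_inv y := by
    funext η
    simp only [Equiv.apply_symm_apply]
    rw [← mul_assoc, relSgn_mul_self, one_mul]

lemma chainEquiv_comm
    (hmem : ∀ τ : Finset V, (τ ∈ X ∧ τ ∉ Y) ↔ ∃ η, (η ∈ Z ∧ η ∉ W) ∧ τ = η ∪ σ)
    (hdisj : ∀ η ∈ Z, Disjoint η σ) (i i' j j' : ℤ)
    (hi : i = i' + σ.card) (hj : j = j' + σ.card) (x : RelFace X Y i → ℝ) :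
    chainEquiv X Y Z W σ hmem hdisj j j' hj (relBoundary X Y i j x)
      = relBoundary Z W i' j' (chainEquiv X Y Z W σ hmem hdisj i i' hi x) := by
  funext η
  show relSgn σ η.1 * (relBoundary X Y i j x) ((faceEquiv X Y Z W σ hmem hdisj j j' hj).symm η)
    = _
  simp only [relBoundary]
  erw [Matrix.mulVecLin_apply, Matrix.mulVecLin_apply]
  simp only [Matrix.mulVec, dotProduct]
  rw [Finset.mul_sum]
  rw [← Equiv.sum_comp (faceEquiv X Y Z W σ hmem hdisj i i' hi).symm]
  apply Finset.sum_congr rfl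
  intro ρ _
  set e_i := faceEquiv X Y Z W σ hmem hdisj i i' hi
  set e_j := faceEquiv X Y Z W σ hmem hdisj j j' hj
  have h1 : (e_i.symm ρ).1 = ρ.1 ∪ σ := rfl
  have h2 : (e_j.symm η).1 = η.1 ∪ σ := rfl
  show relSgn σ η.1 * ((∑ v ∈ (e_i.symm ρ).1, if (e_i.symm ρ).1.erase v = (e_j.symm η).1
      then (-1 : ℝ) ^ (((e_i.symm ρ).1.filter (· < v)).card) else 0) * x (e_i.symm ρ))
    = (∑ v ∈ ρ.1, if ρ.1.erase v = η.1
      then (-1 : ℝ) ^ ((ρ.1.filter (· < v)).card) else 0)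
      * (relSgn σ ρ.1 * x (e_i.symm ρ))
  rw [h1, h2, entry_eq σ ρ.1 η.1 (hdisj ρ.1 ρ.2.1) (hdisj η.1 η.2.1)]
  have hη := relSgn_mul_self σ η.1
  linear_combination (relSgn σ ρ.1 * (∑ v ∈ ρ.1, if ρ.1.erase v = η.1
    then (-1 : ℝ) ^ ((ρ.1.filter (· < v)).card) else 0) * x (e_i.symm ρ)) * hη

end FaceEquiv

section Homology
variable {R M₁ M₂ M₃ N₁ N₂ N₃ : Type*} [CommRing R]
  [AddCommGroup M₁] [Module R M₁] [AddCommGroup M₂] [Module R M₂]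
  [AddCommGroup M₃] [Module R M₃] [AddCommGroup N₁] [Module R N₁]
  [AddCommGroup N₂] [Module R N₂] [AddCommGroup N₃] [Module R N₃]

noncomputable def homologyCongr
    (d1 : M₁ →ₗ[R] M₂) (d0 : M₂ →ₗ[R] M₃) (d1' : N₁ →ₗ[R] N₂) (d0' : N₂ →ₗ[R] N₃)
    (f1 : M₁ ≃ₗ[R] N₁) (f2 : M₂ ≃ₗ[R] N₂) (f3 : M₃ ≃ₗ[R] N₃)
    (h1 : ∀ x, f2 (d1 x) = d1' (f1 x)) (h0 : ∀ x, f3 (d0 x) = d0' (f2 x)) :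
    (LinearMap.ker d0 ⧸ Submodule.comap (LinearMap.ker d0).subtype (LinearMap.range d1))
      ≃ₗ[R] (LinearMap.ker d0' ⧸
        Submodule.comap (LinearMap.ker d0').subtype (LinearMap.range d1')) := by
  have hker : Submodule.map (f2 : M₂ →ₗ[R] N₂) (LinearMap.ker d0) = LinearMap.ker d0' := by
    ext y
    simp only [Submodule.mem_map, LinearMap.mem_ker, LinearEquiv.coe_coe]
    constructor
    · rintro ⟨x, hx, rfl⟩
      rw [← h0] at *
      rw [hx, map_zero]
    · intro hy
      refine ⟨f2.symm y, ?_, f2.apply_symm_apply y⟩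
      have : f3 (d0 (f2.symm y)) = 0 := by
        rw [h0, f2.apply_symm_apply, hy]
      simpa using (f3.injective (by simpa using this))
  let g : LinearMap.ker d0 ≃ₗ[R] LinearMap.ker d0' :=
    (f2.submoduleMap (LinearMap.ker d0)).trans (LinearEquiv.ofEq _ _ hker)
  refine Submodule.Quotient.equiv _ _ g ?_
  ext y
  simp only [Submodule.mem_map, Submodule.mem_comap, Submodule.subtype_apply,
    LinearMap.mem_range]
  constructor
  · rintro ⟨x, ⟨a, ha⟩, rfl⟩
    refine ⟨f1 a, ?_⟩
    have : (g x : N₂) = f2 (x : M₂) := rfl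
    show d1' (f1 a) = f2 (x : M₂)
    rw [← ha, h1]
  · rintro ⟨b, hb⟩
    have hx1 : d1 (f1.symm b) ∈ LinearMap.ker d0 := by
      rw [LinearMap.mem_ker]
      apply f3.injective
      rw [map_zero, h0, h1, f1.apply_symm_apply, hb]
      exact y.2
    refine ⟨⟨d1 (f1.symm b), hx1⟩, ⟨f1.symm b, rfl⟩, ?_⟩
    apply Subtype.ext
    show f2 (d1 (f1.symm b)) = (y : N₂)
    rw [h1, f1.apply_symm_apply, hb]

end Homology

/-- Let `Y ⊆ X` be simplicial complexes on a finite vertex set `V`. Suppose there are a face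
`σ ∈ X` and subcomplexes `W ⊆ Z ⊆ X[V∖σ]` such that `X∖Y = {η ∪ σ : η ∈ Z∖W}`. Then
`Hₖ(X,Y) ≅ H_{k-|σ|}(Z,W)` for all `k`. -/
theorem relative_homology_of_shifted_pair
    {V : Type*} [DecidableEq V] [LinearOrder V] [Fintype V]
    (X Y Z W : Finset (Finset V)) (σ : Finset V)
    (hX : IsComplex X) (hY : IsComplex Y) (hYX : Y ⊆ X)
    (hZ : IsComplex Z) (hW : IsComplex W) (hWZ : W ⊆ Z)
    (hσ : σ ∈ X) (hZX : Z ⊆ induced X (Finset.univ \ σ))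
    (hXY : X \ Y = (Z \ W).image fun η => η ∪ σ) :
    ∀ k : ℤ, Nonempty ((relHomology X Y k) ≃ₗ[ℝ] (relHomology Z W (k - σ.card))) := by
  intro k
  have hdisj : ∀ η ∈ Z, Disjoint η σ := by
    intro η hη
    have := hZX hη
    rw [induced, Finset.mem_filter] at this
    exact (Finset.subset_sdiff.1 this.2).2
  have hmem : ∀ τ : Finset V, (τ ∈ X ∧ τ ∉ Y) ↔ ∃ η, (η ∈ Z ∧ η ∉ W) ∧ τ = η ∪ σ := by
    intro τ
    rw [← Finset.mem_sdiff, hXY, Finset.mem_image]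
    constructor
    · rintro ⟨η, hη, rfl⟩
      rw [Finset.mem_sdiff] at hη
      exact ⟨η, hη, rfl⟩
    · rintro ⟨η, hη, rfl⟩
      exact ⟨η, Finset.mem_sdiff.2 hη, rfl⟩
  have c : ℤ := (σ.card : ℤ)
  refine ⟨homologyCongr (relBoundary X Y (k + 1) k) (relBoundary X Y k (k - 1))
    (relBoundary Z W (k - σ.card + 1) (k - σ.card))
    (relBoundary Z W (k - σ.card) (k - σ.card - 1))
    (chainEquiv X Y Z W σ hmem hdisj (k + 1) (k - σ.card + 1) (by ring))
    (chainEquiv X Y Z W σ hmem hdisj k (k - σ.card) (by ring))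
    (chainEquiv X Y Z W σ hmem hdisj (k - 1) (k - σ.card - 1) (by ring))
    (fun x => ?_) (fun x => ?_)⟩
  · exact chainEquiv_comm X Y Z W σ hmem hdisj _ _ _ _ (by ring) (by ring) x
  · exact chainEquiv_comm X Y Z W σ hmem hdisj _ _ _ _ (by ring) (by ring) x
end

section
/- Let K be a simplicial complex on a finite vertex set V, let t ≥ 0 be an integer, and let σ ∈ K. Then T_t(K) ∖ T_t(cost(K,σ)) = { σ ∪ η : η ∈ T_t(lk(K,σ)) ∖ ( ⋃_{σ'⊆σ, 1≤|σ'|≤t} T_{t−|σ'|}(lk(K[V∖σ'], σ∖σ')) ) }, where the tolerance complexes of lk(K,σ) and of lk(K[V∖σ'], σ∖σ') are taken on the vertex set V∖σ, the tolerance complex of cost(K,σ) is taken on V, and the tolerance complex of K[U] is taken on U. -/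
open Finset

variable {V : Type*} [DecidableEq V] [LinearOrder V] [Fintype V]

lemma mem_tol_iff {V : Type*} [DecidableEq V] {A : Finset V} {t : ℕ}
    {K : Finset (Finset V)} {ρ : Finset V} :
    ρ ∈ tol A t K ↔ ∃ μ ∈ K, μ ⊆ ρ ∧ ρ \ μ ⊆ A ∧ (ρ \ μ).card ≤ t := by
  constructor
  · intro h
    obtain ⟨⟨τ, μ⟩, hp, rfl⟩ := Finset.mem_image.mp h
    rw [Finset.mem_product, Finset.mem_filter, Finset.mem_powerset] at hp
    have hsub : (μ ∪ τ) \ μ ⊆ τ := by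
      intro x hx; rw [Finset.mem_sdiff, Finset.mem_union] at hx; tauto
    exact ⟨μ, hp.2, Finset.subset_union_left, hsub.trans hp.1.1,
      le_trans (Finset.card_le_card hsub) hp.1.2⟩
  · rintro ⟨μ, hμK, hsub, hA, hcard⟩
    refine Finset.mem_image.mpr ⟨(ρ \ μ, μ), ?_, Finset.union_sdiff_of_subset hsub⟩
    rw [Finset.mem_product, Finset.mem_filter, Finset.mem_powerset]
    exact ⟨⟨hA, hcard⟩, hμK⟩

/-- The faces of `T_t(K)` which are not faces of `T_t(cost(K,σ))` are exactly the sets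
`σ ∪ η`, where `η` ranges over the faces of `T_t(lk(K,σ))` not belonging to
`⋃_{σ' ⊆ σ, 1 ≤ |σ'| ≤ t} T_{t-|σ'|}(lk(K[V∖σ'], σ∖σ'))`. -/
theorem tolerance_sdiff_costar_eq
    {V : Type*} [DecidableEq V] [Fintype V]
    (K : Finset (Finset V)) (hK : IsComplex K) (t : ℕ) (σ : Finset V) (hσ : σ ∈ K) :
    tol Finset.univ t K \ tol Finset.univ t (costar K σ) =
      ((tol (Finset.univ \ σ) t (link K σ)) \
        ((σ.powerset.filter fun σ' => 1 ≤ σ'.card ∧ σ'.card ≤ t).biUnion fun σ' =>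
          tol (Finset.univ \ σ) (t - σ'.card)
            (link (induced K (Finset.univ \ σ')) (σ \ σ')))).image
        fun η => σ ∪ η := by
  ext ρ
  simp only [Finset.mem_sdiff, Finset.mem_image]
  constructor
  · rintro ⟨h1, h2⟩
    obtain ⟨μ, hμK, hμρ, -, hcard⟩ := mem_tol_iff.mp h1
    have hB : ∀ μ' ∈ K, μ' ⊆ ρ → (ρ \ μ').card ≤ t → σ ⊆ μ' := by
      intro μ' hμ'K hμ'ρ hc
      by_contra hns
      exact h2 (mem_tol_iff.mpr ⟨μ', Finset.mem_filter.mpr ⟨hμ'K, hns⟩, hμ'ρ,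
        Finset.subset_univ _, hc⟩)
    have hσμ : σ ⊆ μ := hB μ hμK hμρ hcard
    have hσρ : σ ⊆ ρ := hσμ.trans hμρ
    refine ⟨ρ \ σ, ⟨?_, ?_⟩, Finset.union_sdiff_of_subset hσρ⟩
    · -- ρ \ σ ∈ tol (univ \ σ) t (link K σ)
      refine mem_tol_iff.mpr ⟨μ \ σ, ?_, Finset.sdiff_subset_sdiff hμρ Finset.Subset.rfl,
        ?_, ?_⟩
      · rw [link, Finset.mem_filter]
        refine ⟨hK μ hμK _ Finset.sdiff_subset, ?_, ?_⟩
        · apply Finset.eq_empty_iff_forall_notMem.mpr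
          intro x hx
          rw [Finset.mem_inter, Finset.mem_sdiff] at hx
          exact hx.1.2 hx.2
        · rwa [Finset.sdiff_union_of_subset hσμ]
      · exact Finset.sdiff_subset.trans
          (Finset.sdiff_subset_sdiff (Finset.subset_univ ρ) Finset.Subset.rfl)
      · have heq : (ρ \ σ) \ (μ \ σ) = ρ \ μ := by
          ext x
          simp only [Finset.mem_sdiff, not_and, not_not]
          constructor
          · rintro ⟨⟨h1, h2⟩, h3⟩
            exact ⟨h1, fun h => h2 (h3 h)⟩
          · rintro ⟨h1, h2⟩
            exact ⟨⟨h1, fun h => h2 (hσμ h)⟩, fun h => absurd (h2 h) not_false⟩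
        rw [heq]; exact hcard
    · -- not in the biUnion
      intro hmem
      obtain ⟨σ', hσ'f, hη⟩ := Finset.mem_biUnion.mp hmem
      rw [Finset.mem_filter, Finset.mem_powerset] at hσ'f
      have hσ'σ := hσ'f.1
      have h1' := hσ'f.2.1
      have hσ't := hσ'f.2.2
      obtain ⟨ν, hνlk, hνη, -, hνcard⟩ := mem_tol_iff.mp hη
      rw [link, Finset.mem_filter] at hνlk
      have hμ'K : ν ∪ (σ \ σ') ∈ K := (Finset.mem_filter.mp hνlk.2.2).1
      have hνρσ : ν ⊆ ρ \ σ := hνη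
      have hμ'ρ : ν ∪ (σ \ σ') ⊆ ρ :=
        Finset.union_subset (hνρσ.trans Finset.sdiff_subset)
          (Finset.sdiff_subset.trans hσρ)
      have hdisj : ∀ x ∈ σ', x ∉ ν ∪ (σ \ σ') := by
        intro x hx hxμ'
        rcases Finset.mem_union.mp hxμ' with h | h
        · exact (Finset.mem_sdiff.mp (hνρσ h)).2 (hσ'σ hx)
        · exact (Finset.mem_sdiff.mp h).2 hx
      have hsub2 : ρ \ (ν ∪ (σ \ σ')) ⊆ σ' ∪ ((ρ \ σ) \ ν) := by
        intro x hx
        have hxx : ∀ y ∈ ν, y ∈ ρ \ σ := fun y hy => hνρσ hy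
        simp only [Finset.mem_sdiff, Finset.mem_union, not_or, not_and, not_not] at hx ⊢
        tauto
      have hcard' : (ρ \ (ν ∪ (σ \ σ'))).card ≤ t := by
        have h3 := Finset.card_le_card hsub2
        have h4 := Finset.card_union_le σ' ((ρ \ σ) \ ν)
        omega
      have hfin := hB _ hμ'K hμ'ρ hcard'
      obtain ⟨x, hx⟩ := Finset.card_pos.mp (by omega : 0 < σ'.card)
      exact hdisj x hx (hfin (hσ'σ hx))
  · rintro ⟨η, ⟨hC, hD⟩, rfl⟩
    obtain ⟨ν, hνlk, hνη, hηini, hνcard⟩ := mem_tol_iff.mp hC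
    rw [link, Finset.mem_filter] at hνlk
    obtain ⟨hνK, hνσ, hνσK⟩ := hνlk
    have hησ : ∀ x ∈ η, x ∉ σ := by
      intro x hx hxσ
      by_cases hxν : x ∈ ν
      · exact Finset.notMem_empty x (hνσ ▸ Finset.mem_inter.mpr ⟨hxν, hxσ⟩)
      · exact (Finset.mem_sdiff.mp (hηini (Finset.mem_sdiff.mpr ⟨hx, hxν⟩))).2 hxσ
    constructor
    · -- σ ∪ η ∈ tol univ t K
      have key : (σ ∪ η) \ (ν ∪ σ) = η \ ν := by
        ext x
        simp only [Finset.mem_sdiff, Finset.mem_union, not_or]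
        constructor
        · rintro ⟨h1, h2, h3⟩; exact ⟨h1.resolve_left h3, h2⟩
        · rintro ⟨h1, h2⟩; exact ⟨Or.inr h1, h2, hησ x h1⟩
      refine mem_tol_iff.mpr ⟨ν ∪ σ, hνσK, ?_, Finset.subset_univ _, ?_⟩
      · exact Finset.union_subset (hνη.trans Finset.subset_union_right)
          Finset.subset_union_left
      · rw [key]; exact le_trans hνcard (by omega)
    · -- σ ∪ η ∉ tol univ t (costar K σ)
      intro hbad
      obtain ⟨μ, hμcost, hμρ, -, hcμ⟩ := mem_tol_iff.mp hbad
      rw [costar, Finset.mem_filter] at hμcost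
      obtain ⟨hμK, hnσμ⟩ := hμcost
      have hσ'ne : (σ \ μ).Nonempty := Finset.sdiff_nonempty.mpr hnσμ
      have hσ'ρμ : σ \ μ ⊆ (σ ∪ η) \ μ := by
        intro x hx
        rw [Finset.mem_sdiff] at hx ⊢
        exact ⟨Finset.mem_union_left _ hx.1, hx.2⟩
      have hσ'card : (σ \ μ).card ≤ t := le_trans (Finset.card_le_card hσ'ρμ) hcμ
      have hν'η : μ \ σ ⊆ η := by
        intro x hx
        rw [Finset.mem_sdiff] at hx
        rcases Finset.mem_union.mp (hμρ hx.1) with h | h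
        · exact absurd h hx.2
        · exact h
      have hsplit : (σ ∪ η) \ μ = (σ \ μ) ∪ (η \ (μ \ σ)) := by
        ext x
        have hx := hησ x
        simp only [Finset.mem_sdiff, Finset.mem_union, not_and, not_not]
        constructor
        · rintro ⟨h1 | h1, h2⟩
          · exact Or.inl ⟨h1, h2⟩
          · exact Or.inr ⟨h1, fun h => absurd h h2⟩
        · rintro (⟨h1, h2⟩ | ⟨h1, h2⟩)
          · exact ⟨Or.inl h1, h2⟩
          · exact ⟨Or.inr h1, fun hxμ => hx h1 (h2 hxμ)⟩
      have hdisj2 : Disjoint (σ \ μ) (η \ (μ \ σ)) := by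
        rw [Finset.disjoint_left]
        intro x hx hx2
        exact hησ x (Finset.mem_sdiff.mp hx2).1 (Finset.mem_sdiff.mp hx).1
      have hcards : ((σ ∪ η) \ μ).card = (σ \ μ).card + (η \ (μ \ σ)).card := by
        rw [hsplit, Finset.card_union_of_disjoint hdisj2]
      apply hD
      refine Finset.mem_biUnion.mpr ⟨σ \ μ, Finset.mem_filter.mpr
        ⟨Finset.mem_powerset.mpr Finset.sdiff_subset,
          Finset.card_pos.mpr hσ'ne, hσ'card⟩, ?_⟩
      refine mem_tol_iff.mpr ⟨μ \ σ, ?_, hν'η, ?_, ?_⟩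
      · rw [link, Finset.mem_filter]
        refine ⟨?_, ?_, ?_⟩
        · rw [induced, Finset.mem_filter]
          refine ⟨hK μ hμK _ Finset.sdiff_subset, ?_⟩
          intro x hx
          rw [Finset.mem_sdiff] at hx ⊢
          exact ⟨Finset.mem_univ x, fun h => hx.2 (Finset.mem_sdiff.mp h).1⟩
        · apply Finset.eq_empty_iff_forall_notMem.mpr
          intro x hx
          rw [Finset.mem_inter, Finset.mem_sdiff, Finset.mem_sdiff] at hx
          exact hx.1.2 hx.2.1
        · rw [induced, Finset.mem_filter]
          have hsubμ : (μ \ σ) ∪ (σ \ (σ \ μ)) ⊆ μ := by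
            intro x hx
            simp only [Finset.mem_union, Finset.mem_sdiff, not_and, not_not] at hx
            tauto
          refine ⟨hK μ hμK _ hsubμ, ?_⟩
          intro x hx
          simp only [Finset.mem_union, Finset.mem_sdiff, not_and, not_not] at hx
          rw [Finset.mem_sdiff]
          refine ⟨Finset.mem_univ x, ?_⟩
          rw [Finset.mem_sdiff]
          tauto
      · intro x hx
        rw [Finset.mem_sdiff] at hx ⊢
        exact ⟨Finset.mem_univ x, hησ x hx.1⟩
      · omega
end

section
/- For every fixed integer t ≥ 0 there exist a constant C_t > 0 and an integer d_0 such that h(t,d) ≤ C_t · d^{t+1} for all d ≥ d_0; that is, for fixed t, h(t,d) = O(d^{t+1}) as d → ∞, where h is defined by h(0,d) = d for all d ≥ 0 and, for t > 0, h(t,d) = (Σ_{s=1}^{min(t,d)} C(d,s)·(h(t−s,d)+1)) + d. -/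
/-- The function `h(t,d)`: `h(0,d) = d` and, for `t > 0`,
`h(t,d) = (∑ s = 1 .. min t d, C(d,s) * (h(t-s,d) + 1)) + d`. -/
def hfun : ℕ → ℕ → ℕ
  | 0, d => d
  | t + 1, d =>
      (∑ s ∈ (Finset.Icc 1 (min (t + 1) d)).attach,
        Nat.choose d s.1 * (hfun (t + 1 - s.1) d + 1)) + d
  termination_by t _ => t
  decreasing_by
    have hs := s.2
    simp only [Finset.mem_Icc] at hs
    omega

lemma hfun_nat_bound (t : ℕ) :
    ∃ C : ℕ, 0 < C ∧ ∀ u ≤ t, ∀ d, 1 ≤ d → hfun u d ≤ C * d ^ (u + 1) := by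
  induction t with
  | zero =>
    refine ⟨1, one_pos, ?_⟩
    intro u hu d hd
    interval_cases u
    simp [hfun]
  | succ t ih =>
    obtain ⟨C, hC, hbound⟩ := ih
    refine ⟨(t + 1) * (C + 1) + 1, by positivity, ?_⟩
    intro u hu d hd
    rcases Nat.lt_or_ge u (t + 1) with h | h
    · refine le_trans (hbound u (by omega) d hd) ?_
      exact Nat.mul_le_mul_right _ (by nlinarith)
    · have hu' : u = t + 1 := by omega
      subst hu'
      rw [hfun]
      have hsum : (∑ s ∈ (Finset.Icc 1 (min (t + 1) d)).attach,
          Nat.choose d s.1 * (hfun (t + 1 - s.1) d + 1))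
          ≤ (t + 1) * ((C + 1) * d ^ (t + 2)) := by
        calc (∑ s ∈ (Finset.Icc 1 (min (t + 1) d)).attach,
              Nat.choose d s.1 * (hfun (t + 1 - s.1) d + 1))
            ≤ ∑ _s ∈ (Finset.Icc 1 (min (t + 1) d)).attach, (C + 1) * d ^ (t + 2) := by
              apply Finset.sum_le_sum
              intro s _
              have hs := s.2
              simp only [Finset.mem_Icc, le_min_iff] at hs
              have hs1 : 1 ≤ s.1 := hs.1
              have hs2 : s.1 ≤ t + 1 := hs.2.1
              have h1 : hfun (t + 1 - s.1) d ≤ C * d ^ (t + 1 - s.1 + 1) :=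
                hbound _ (by omega) d hd
              have h2 : Nat.choose d s.1 ≤ d ^ s.1 := Nat.choose_le_pow d s.1
              calc Nat.choose d s.1 * (hfun (t + 1 - s.1) d + 1)
                  ≤ d ^ s.1 * (C * d ^ (t + 1 - s.1 + 1) + 1) :=
                    Nat.mul_le_mul h2 (by omega)
                _ = C * (d ^ s.1 * d ^ (t + 1 - s.1 + 1)) + d ^ s.1 := by ring
                _ = C * d ^ (t + 2) + d ^ s.1 := by
                    have hexp : s.1 + (t + 1 - s.1 + 1) = t + 2 := by omega
                    rw [← pow_add, hexp]
                _ ≤ C * d ^ (t + 2) + d ^ (t + 2) :=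
                    Nat.add_le_add_left (Nat.pow_le_pow_right hd (by omega)) _
                _ = (C + 1) * d ^ (t + 2) := by ring
          _ = (Finset.Icc 1 (min (t + 1) d)).card * ((C + 1) * d ^ (t + 2)) := by
              rw [Finset.sum_const, Finset.card_attach, smul_eq_mul]
          _ ≤ (t + 1) * ((C + 1) * d ^ (t + 2)) := by
              apply Nat.mul_le_mul_right
              rw [Nat.card_Icc]
              omega
      have hd2 : d ≤ d ^ (t + 2) := Nat.le_self_pow (by omega) d
      calc (∑ s ∈ (Finset.Icc 1 (min (t + 1) d)).attach,
              Nat.choose d s.1 * (hfun (t + 1 - s.1) d + 1)) + d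
          ≤ (t + 1) * ((C + 1) * d ^ (t + 2)) + d ^ (t + 2) := Nat.add_le_add hsum hd2
        _ = ((t + 1) * (C + 1) + 1) * d ^ (t + 1 + 1) := by ring

/-- For every fixed `t`, `h(t,d) = O(d^(t+1))` as `d → ∞`: there are a constant `C > 0` and
a threshold `d₀` such that `h(t,d) ≤ C * d^(t+1)` for all `d ≥ d₀`. -/
theorem hfun_bigO (t : ℕ) :
    ∃ C : ℝ, 0 < C ∧ ∃ d₀ : ℕ, ∀ d : ℕ, d₀ ≤ d →
      (hfun t d : ℝ) ≤ C * (d : ℝ) ^ (t + 1) := by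
  obtain ⟨C, hC, hbound⟩ := hfun_nat_bound t
  refine ⟨C, by exact_mod_cast hC, 1, fun d hd => ?_⟩
  have := hbound t le_rfl d hd
  calc (hfun t d : ℝ) ≤ ((C * d ^ (t + 1) : ℕ) : ℝ) := by exact_mod_cast this
    _ = C * (d : ℝ) ^ (t + 1) := by push_cast; ring
end

section
/- Let t ≥ 1 be an integer, let A and B be disjoint sets of size t+1 each, and let K be the simplicial complex on vertex set A ∪ B whose faces are exactly the subsets of A and the subsets of B (i.e. K = 2^A ∪ 2^B). Then K is 1-collapsible, and the t-tolerance complex T_t(K) equals the boundary of the simplex on A ∪ B, i.e. T_t(K) = {σ : σ ⊊ A ∪ B}; in particular, T_t(K) is not 2t-Leray. -/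
open Finset

variable {V : Type*} [DecidableEq V] [LinearOrder V] [Fintype V]

set_option linter.unusedSectionVars false

lemma powerset_collapsible (B : Finset V) : Collapsible 1 B.powerset := by
  induction B using Finset.induction_on with
  | empty =>
    refine Collapsible.step _ ∅ ⟨by simp, ∅, ⟨⟨by simp, ?_⟩, by simp⟩, ?_⟩ (by simp) ?_
    · intro ρ hρ _; simpa using hρ
    · rintro τ ⟨⟨hτ, -⟩, -⟩; simpa using hτ
    · have : ({∅} : Finset (Finset V)).filter (fun ρ => ¬ ∅ ⊆ ρ) = ∅ := by
        ext σ; simp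
      rw [show ((∅:Finset V).powerset) = ({∅} : Finset (Finset V)) from by simp] at *
      rw [this]; exact Collapsible.void
  | @insert b s hb ih =>
    have hmax : IsMaximalFace (insert b s).powerset (insert b s) :=
      ⟨by simp, fun ρ hρ h => subset_antisymm (by simpa using hρ) h⟩
    refine Collapsible.step _ {b} ⟨by simp, insert b s, ⟨hmax, by simp⟩, ?_⟩ (by simp) ?_
    · rintro τ ⟨hτm, -⟩
      exact (hτm.2 (insert b s) (by simp) (by simpa using hτm.1)).symm
    · have hfil : ((insert b s).powerset.filter fun ρ => ¬ {b} ⊆ ρ) = s.powerset := by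
        ext σ
        simp only [mem_filter, mem_powerset, singleton_subset_iff]
        constructor
        · rintro ⟨h1, h2⟩; rwa [← erase_eq_of_notMem h2, ← subset_insert_iff]
        · intro h; exact ⟨h.trans (subset_insert _ _), fun hbσ => hb (h hbσ)⟩
      rw [hfil]; exact ih

lemma union_powerset_collapsible (A B : Finset V) (hAB : Disjoint A B) :
    Collapsible 1 (A.powerset ∪ B.powerset) := by
  induction A using Finset.induction_on with
  | empty =>
    have : (∅ : Finset V).powerset ∪ B.powerset = B.powerset := by
      ext σ; simp only [mem_union, mem_powerset, powerset_empty, mem_singleton]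
      exact ⟨fun h => h.elim (fun e => e ▸ empty_subset _) id, Or.inr⟩
    rw [this]; exact powerset_collapsible B
  | @insert a s ha ih =>
    have haB : a ∉ B := fun h => disjoint_left.mp hAB (mem_insert_self a s) h
    have hsB : Disjoint s B := hAB.mono_left (subset_insert a s)
    set K := (insert a s).powerset ∪ B.powerset with hK
    have hmem : ∀ ρ ∈ K, ρ ⊆ insert a s ∨ ρ ⊆ B := by
      intro ρ hρ; simpa [hK] using hρ
    have hmax : IsMaximalFace K (insert a s) := by
      refine ⟨by simp [hK], fun ρ hρ h => ?_⟩
      rcases hmem ρ hρ with h' | h'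
      · exact subset_antisymm h' h
      · exact absurd (h' (h (mem_insert_self a s))) haB
    refine Collapsible.step _ {a} ⟨by simp [hK], insert a s, ⟨hmax, by simp⟩, ?_⟩ (by simp) ?_
    · rintro τ ⟨hτm, haτ⟩
      rcases hmem τ hτm.1 with h' | h'
      · exact (hτm.2 (insert a s) (by simp [hK]) h').symm
      · exact absurd (h' (haτ (mem_singleton_self a))) haB
    · have hfil : (K.filter fun ρ => ¬ {a} ⊆ ρ) = s.powerset ∪ B.powerset := by
        ext σ
        simp only [hK, mem_filter, mem_union, mem_powerset, singleton_subset_iff]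
        constructor
        · rintro ⟨h1 | h1, h2⟩
          · left; rwa [← erase_eq_of_notMem h2, ← subset_insert_iff]
          · right; exact h1
        · rintro (h | h)
          · exact ⟨Or.inl (h.trans (subset_insert _ _)), fun hc => ha (h hc)⟩
          · exact ⟨Or.inr h, fun hc => haB (h hc)⟩
      rw [hfil]; exact ih hsB

lemma tol_eq (t : ℕ) (A B : Finset V) (hAB : Disjoint A B)
    (hA : A.card = t + 1) (hB : B.card = t + 1) :
    tol (A ∪ B) t (A.powerset ∪ B.powerset) =
      (A ∪ B).powerset.filter (fun σ => σ ≠ A ∪ B) := by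
  ext σ
  simp only [tol, mem_image, mem_product, mem_filter, mem_powerset, mem_union, Prod.exists,
    mem_powerset]
  constructor
  · rintro ⟨τ, η, ⟨⟨hτU, hτc⟩, hη⟩, rfl⟩
    have hsub : η ∪ τ ⊆ A ∪ B := by
      rcases hη with h | h
      · exact union_subset (h.trans subset_union_left) hτU
      · exact union_subset (h.trans subset_union_right) hτU
    refine ⟨hsub, fun hcontra => ?_⟩
    rcases hη with h | h
    · have hBτ : B ⊆ τ := by
        intro b hb
        have : b ∈ η ∪ τ := hcontra ▸ mem_union_right _ hb
        rcases mem_union.mp this with h' | h'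
        · exact absurd (h h') (disjoint_right.mp hAB hb)
        · exact h'
      have := card_le_card hBτ
      omega
    · have hAτ : A ⊆ τ := by
        intro a haa
        have : a ∈ η ∪ τ := hcontra ▸ mem_union_left _ haa
        rcases mem_union.mp this with h' | h'
        · exact absurd (h h') (disjoint_left.mp hAB haa)
        · exact h'
      have := card_le_card hAτ
      omega
  · rintro ⟨hsub, hne⟩
    have hσ : σ ∩ A ∪ σ ∩ B = σ := by
      rw [← inter_union_distrib_left]
      exact inter_eq_left.mpr hsub
    by_cases hBσ : B ⊆ σ
    · have hAσ : ¬ A ⊆ σ := by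
        intro hAσ
        exact hne (subset_antisymm hsub (union_subset hAσ hBσ))
      have hlt : (σ ∩ A).card < A.card :=
        card_lt_card (ssubset_of_subset_of_ne inter_subset_right
          (fun h => hAσ (by rw [← h]; exact inter_subset_left)))
      exact ⟨σ ∩ A, σ ∩ B, ⟨⟨inter_subset_left.trans hsub,
        by omega⟩, Or.inr inter_subset_right⟩, by rw [union_comm]; exact hσ⟩
    · have hlt : (σ ∩ B).card < B.card :=
        card_lt_card (ssubset_of_subset_of_ne inter_subset_right
          (fun h => hBσ (by rw [← h]; exact inter_subset_left)))
      exact ⟨σ ∩ B, σ ∩ A, ⟨⟨inter_subset_left.trans hsub,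
        by omega⟩, Or.inl inter_subset_right⟩, hσ⟩

lemma sign_cancel_lt (Ω : Finset V) {u v : V} (hu : u ∈ Ω) (hlt : u < v) :
    (-1:ℝ)^(((Ω.erase v).filter (· < u)).card) * (-1:ℝ)^((Ω.filter (· < v)).card)
    + (-1:ℝ)^(((Ω.erase u).filter (· < v)).card) * (-1:ℝ)^((Ω.filter (· < u)).card) = 0 := by
  have h1 : (Ω.erase v).filter (· < u) = Ω.filter (· < u) := by
    ext w
    simp only [mem_filter, mem_erase]
    constructor
    · rintro ⟨⟨-, hw⟩, hw2⟩; exact ⟨hw, hw2⟩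
    · rintro ⟨hw, hw2⟩; exact ⟨⟨ne_of_lt (hw2.trans hlt), hw⟩, hw2⟩
  have h2 : (Ω.erase u).filter (· < v) = (Ω.filter (· < v)).erase u :=
    filter_erase _ _ _
  have hu' : u ∈ Ω.filter (· < v) := mem_filter.mpr ⟨hu, hlt⟩
  rw [h1, h2, card_erase_of_mem hu']
  obtain ⟨c, hc⟩ : ∃ c, (Ω.filter (· < v)).card = c + 1 :=
    ⟨(Ω.filter (· < v)).card - 1, by have := card_pos.mpr ⟨u, hu'⟩; omega⟩
  rw [hc]
  simp only [Nat.add_sub_cancel, pow_succ]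
  ring

lemma sign_cancel (Ω : Finset V) {u v : V} (hu : u ∈ Ω) (hv : v ∈ Ω) (huv : u ≠ v) :
    (-1:ℝ)^(((Ω.erase v).filter (· < u)).card) * (-1:ℝ)^((Ω.filter (· < v)).card)
    + (-1:ℝ)^(((Ω.erase u).filter (· < v)).card) * (-1:ℝ)^((Ω.filter (· < u)).card) = 0 := by
  rcases lt_or_gt_of_ne huv with h | h
  · exact sign_cancel_lt Ω hu h
  · rw [add_comm]; exact sign_cancel_lt Ω hv h

lemma boundary_homology_nontrivial (Ω : Finset V) (m : ℕ) (hΩ : Ω.card = m + 2) :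
    ¬ Subsingleton (reducedHomology (Ω.powerset.filter (fun σ => σ ≠ Ω)) (m : ℤ)) := by
  set K := Ω.powerset.filter (fun σ => σ ≠ Ω) with hKdef
  have memK : ∀ {σ : Finset V}, σ ∈ K ↔ σ ⊆ Ω ∧ σ ≠ Ω := by
    intro σ; simp [hKdef, mem_filter, mem_powerset]
  -- there are no faces of cardinality m + 2
  have hempty : IsEmpty (RelFace K (∅ : Finset (Finset V)) ((m:ℤ) + 1)) := by
    constructor
    rintro ⟨σ, hσ, -, hcard⟩
    have h1 : σ.card = m + 2 := by omega
    exact (memK.mp hσ).2 (eq_of_subset_of_card_le (memK.mp hσ).1 (by omega))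
  -- the cycle
  set z : RelFace K (∅ : Finset (Finset V)) (m:ℤ) → ℝ :=
    fun σ => ∑ w ∈ Ω \ σ.1, (-1:ℝ)^((Ω.filter (· < w)).card) with hzdef
  have hfacesub : ∀ σ : RelFace K (∅ : Finset (Finset V)) (m:ℤ), σ.1 ⊆ Ω :=
    fun σ => (memK.mp σ.2.1).1
  -- z is a cycle
  have hker : relBoundary K ∅ (m:ℤ) ((m:ℤ) - 1) z = 0 := by
    funext τ
    have hτc : τ.1.card = m := by have := τ.2.2.2; omega
    have hτΩ : τ.1 ⊆ Ω := (memK.mp τ.2.1).1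
    have hsd : (Ω \ τ.1).card = 2 := by rw [card_sdiff_of_subset hτΩ]; omega
    obtain ⟨u, v, huv, huvs⟩ := card_eq_two.mp hsd
    -- basic membership facts
    have hmem2 : ∀ a b : V, Ω \ τ.1 = {a, b} → a ∈ Ω ∧ a ∉ τ.1 := by
      intro a b hset
      have : a ∈ Ω \ τ.1 := by rw [hset]; exact mem_insert_self _ _
      exact ⟨(mem_sdiff.mp this).1, (mem_sdiff.mp this).2⟩
    have huvs' : Ω \ τ.1 = {v, u} := by rw [huvs, pair_comm]
    obtain ⟨huΩ, huτ⟩ := hmem2 u v huvs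
    obtain ⟨hvΩ, hvτ⟩ := hmem2 v u huvs'
    -- the two facets above τ
    have hmkmem : ∀ a b : V, a ≠ b → Ω \ τ.1 = {a, b} →
        insert a τ.1 ∈ K ∧ (insert a τ.1 : Finset V) ∉ (∅ : Finset (Finset V)) ∧
          ((insert a τ.1).card : ℤ) = (m : ℤ) + 1 := by
      intro a b hab hset
      obtain ⟨haΩ, haτ⟩ := hmem2 a b hset
      have hcard : (insert a τ.1).card = m + 1 := by
        rw [card_insert_of_notMem haτ, hτc]
      refine ⟨memK.mpr ⟨insert_subset haΩ hτΩ, ?_⟩, notMem_empty _, by omega⟩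
      intro h
      have := congrArg Finset.card h
      omega
    set σu : RelFace K (∅ : Finset (Finset V)) (m:ℤ) := ⟨insert u τ.1, hmkmem u v huv huvs⟩
      with hσu
    set σv : RelFace K (∅ : Finset (Finset V)) (m:ℤ) := ⟨insert v τ.1, hmkmem v u huv.symm huvs'⟩
      with hσv
    have hne : σu ≠ σv := by
      intro h
      have h1 : (insert u τ.1 : Finset V) = insert v τ.1 := congrArg Subtype.val h
      have : v ∈ insert u τ.1 := h1 ▸ mem_insert_self v τ.1
      rcases mem_insert.mp this with h2 | h2
      · exact huv h2.symm
      · exact hvτ h2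
    -- insert a τ = Ω.erase b
    have hins : ∀ a b : V, a ≠ b → Ω \ τ.1 = {a, b} → insert a τ.1 = Ω.erase b := by
      intro a b hab hset
      obtain ⟨haΩ, haτ⟩ := hmem2 a b hset
      have hbmem : b ∈ Ω \ τ.1 := by rw [hset]; simp
      ext w
      simp only [mem_insert, mem_erase]
      constructor
      · rintro (rfl | hw)
        · exact ⟨hab, haΩ⟩
        · exact ⟨fun h => (mem_sdiff.mp hbmem).2 (h ▸ hw), hτΩ hw⟩
      · rintro ⟨hwb, hwΩ⟩
        by_cases hwτ : w ∈ τ.1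
        · exact Or.inr hwτ
        · have : w ∈ ({a, b} : Finset V) := by rw [← hset]; exact mem_sdiff.mpr ⟨hwΩ, hwτ⟩
          rcases mem_insert.mp this with rfl | hw
          · exact Or.inl rfl
          · exact absurd (mem_singleton.mp hw) hwb
    have hdiff : ∀ a b : V, a ≠ b → Ω \ τ.1 = {a, b} → Ω \ insert a τ.1 = {b} := by
      intro a b hab hset
      rw [sdiff_insert, hset, erase_insert (by simp [hab])]
    -- value of each summand at the two facets
    have hterm : ∀ (a b : V) (hab : a ≠ b) (hset : Ω \ τ.1 = {a, b})
        (σ : RelFace K (∅ : Finset (Finset V)) (m:ℤ)), σ.1 = insert a τ.1 →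
        (∑ w ∈ σ.1, if σ.1.erase w = τ.1 then (-1:ℝ)^((σ.1.filter (· < w)).card) else 0) * z σ
        = (-1:ℝ)^(((Ω.erase b).filter (· < a)).card) * (-1:ℝ)^((Ω.filter (· < b)).card) := by
      intro a b hab hset σ hσ
      obtain ⟨haΩ, haτ⟩ := hmem2 a b hset
      have hsum : (∑ w ∈ σ.1, if σ.1.erase w = τ.1 then (-1:ℝ)^((σ.1.filter (· < w)).card)
          else 0) = (-1:ℝ)^((σ.1.filter (· < a)).card) := by
        have h1 : (∑ w ∈ σ.1, if σ.1.erase w = τ.1 then (-1:ℝ)^((σ.1.filter (· < w)).card)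
            else 0) = if σ.1.erase a = τ.1 then (-1:ℝ)^((σ.1.filter (· < a)).card) else 0 := by
          apply Finset.sum_eq_single_of_mem a (by rw [hσ]; exact mem_insert_self a τ.1)
          intro w hw hwa
          rw [if_neg]
          intro hEq
          have : a ∈ σ.1.erase w := mem_erase.mpr ⟨Ne.symm hwa, by rw [hσ]; exact mem_insert_self a τ.1⟩
          rw [hEq] at this
          exact haτ this
        rw [h1, if_pos (by rw [hσ]; exact erase_insert haτ)]
      have hval : z σ = (-1:ℝ)^((Ω.filter (· < b)).card) := by
        rw [hzdef]
        simp only []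
        rw [hσ, hdiff a b hab hset, sum_singleton]
      rw [hsum, hval, hσ, hins a b hab hset]
    -- now compute the boundary
    have hbz : relBoundary K ∅ (m:ℤ) ((m:ℤ) - 1) z τ
        = ∑ σ : RelFace K (∅ : Finset (Finset V)) (m:ℤ),
            (∑ w ∈ σ.1, if σ.1.erase w = τ.1 then (-1:ℝ)^((σ.1.filter (· < w)).card) else 0)
              * z σ := by
      rfl
    rw [hbz]
    have hzero : ∀ σ ∈ (Finset.univ : Finset (RelFace K (∅ : Finset (Finset V)) (m:ℤ))),
        σ ≠ σu ∧ σ ≠ σv →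
        (∑ w ∈ σ.1, if σ.1.erase w = τ.1 then (-1:ℝ)^((σ.1.filter (· < w)).card) else 0)
          * z σ = 0 := by
      rintro σ - ⟨h1, h2⟩
      apply mul_eq_zero_of_left
      apply Finset.sum_eq_zero
      intro w hw
      rw [if_neg]
      intro hEq
      have hwτ : w ∉ τ.1 := by rw [← hEq]; exact notMem_erase w σ.1
      have hσw : σ.1 = insert w τ.1 := by rw [← hEq, insert_erase hw]
      have hwm : w ∈ ({u, v} : Finset V) := by
        rw [← huvs]; exact mem_sdiff.mpr ⟨hfacesub σ hw, hwτ⟩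
      rcases mem_insert.mp hwm with rfl | hwv
      · exact h1 (Subtype.ext hσw)
      · rw [mem_singleton.mp hwv] at hσw
        exact h2 (Subtype.ext hσw)
    rw [Finset.sum_eq_add_of_mem σu σv (mem_univ _) (mem_univ _) hne hzero,
      hterm u v huv huvs σu rfl, hterm v u huv.symm huvs' σv rfl, Pi.zero_apply]
    exact sign_cancel Ω huΩ hvΩ huv
  -- conclude
  intro hss
  have hzmem : z ∈ LinearMap.ker (relBoundary K ∅ (m:ℤ) ((m:ℤ) - 1)) :=
    LinearMap.mem_ker.mpr hker
  have heq : (Submodule.Quotient.mk (⟨z, hzmem⟩ :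
      LinearMap.ker (relBoundary K ∅ (m:ℤ) ((m:ℤ) - 1))) :
        reducedHomology K (m:ℤ)) = Submodule.Quotient.mk 0 := Subsingleton.elim _ _
  rw [Submodule.Quotient.eq, sub_zero] at heq
  have hz2 : z ∈ LinearMap.range (relBoundary K ∅ ((m:ℤ) + 1) (m:ℤ)) :=
    Submodule.mem_comap.mp heq
  obtain ⟨f, hf⟩ := hz2
  have hfz : f = 0 := funext fun x => (hempty.false x).elim
  rw [hfz, map_zero] at hf
  -- but z is nonzero
  have hΩne : Ω.Nonempty := card_pos.mp (by omega)
  obtain ⟨x0, hx0⟩ := hΩne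
  have hx0c : (Ω.erase x0).card = m + 1 := by rw [card_erase_of_mem hx0]; omega
  set σ0 : RelFace K (∅ : Finset (Finset V)) (m:ℤ) :=
    ⟨Ω.erase x0, memK.mpr ⟨erase_subset _ _, fun h => notMem_erase x0 Ω (by rw [h]; exact hx0)⟩,
      notMem_empty _, by omega⟩ with hσ0
  have hdiff0 : Ω \ Ω.erase x0 = {x0} := by
    ext w
    simp only [mem_sdiff, mem_erase, mem_singleton]
    constructor
    · rintro ⟨hw, h2⟩
      by_contra hne
      exact h2 ⟨hne, hw⟩
    · rintro rfl
      exact ⟨hx0, fun h => h.1 rfl⟩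
  have hz0 : z σ0 = (-1:ℝ)^((Ω.filter (· < x0)).card) := by
    rw [hzdef]
    simp only []
    rw [hdiff0, sum_singleton]
  have := congrFun hf σ0
  rw [Pi.zero_apply] at this
  rw [← this] at hz0
  exact pow_ne_zero _ (by norm_num : (-1:ℝ) ≠ 0) hz0.symm

/-- Let `t ≥ 1` and let `A`, `B` be disjoint sets of size `t+1`. The complex
`K = 2^A ∪ 2^B` on vertex set `A ∪ B` is `1`-collapsible, its `t`-tolerance complex is the
boundary of the simplex on `A ∪ B`, and in particular `T_t(K)` is not `2t`-Leray. -/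
theorem two_simplices_tolerance_not_leray
    {V : Type*} [DecidableEq V] [LinearOrder V] [Fintype V]
    (t : ℕ) (ht : 1 ≤ t) (A B : Finset V) (hAB : Disjoint A B)
    (hA : A.card = t + 1) (hB : B.card = t + 1) :
    Collapsible 1 (A.powerset ∪ B.powerset) ∧
    tol (A ∪ B) t (A.powerset ∪ B.powerset) =
      (A ∪ B).powerset.filter (fun σ => σ ≠ A ∪ B) ∧
    ¬ IsLeray (2 * t) (tol (A ∪ B) t (A.powerset ∪ B.powerset)) := by
  refine ⟨union_powerset_collapsible A B hAB, tol_eq t A B hAB hA hB, ?_⟩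
  rw [tol_eq t A B hAB hA hB]
  intro hL
  have hcard : (A ∪ B).card = 2 * t + 2 := by
    rw [card_union_of_disjoint hAB]; omega
  apply boundary_homology_nontrivial (A ∪ B) (2 * t) hcard
  have hind : induced ((A ∪ B).powerset.filter (fun σ => σ ≠ A ∪ B)) (A ∪ B)
      = (A ∪ B).powerset.filter (fun σ => σ ≠ A ∪ B) := by
    rw [induced, filter_true_of_mem]
    intro σ hσ
    exact mem_powerset.mp (mem_filter.mp hσ).1
  have h := hL (A ∪ B) ((2 * t : ℕ) : ℤ) le_rfl
  rwa [hind] at h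
end

section
/- Let F_1, F_2, …, F_6 be finite families of convex sets in the plane ℝ², and let F be their disjoint union. Suppose that every subfamily F' of F that contains exactly one set from each F_i has a point in common with tolerance 1. Then some F_i has a point in common with tolerance 1. -/
/-- `C` is a vertex cover of the hypergraph `H`: it meets every edge. -/
def IsCover {α : Type*} [DecidableEq α] (H : Finset (Finset α)) (C : Finset α) : Prop :=
  ∀ e ∈ H, (e ∩ C).Nonempty

/-- The covering number `τ(H)` of a hypergraph `H`: the minimum size of a vertex cover. -/
noncomputable def coverNumber {α : Type*} [DecidableEq α] (H : Finset (Finset α)) : ℕ :=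
  sInf {k : ℕ | ∃ C : Finset α, C.card = k ∧ IsCover H C}

/-- `H` is `t`-critical: its covering number is `t`, and removing any edge decreases it. -/
def IsCritical {α : Type*} [DecidableEq α] (t : ℕ) (H : Finset (Finset α)) : Prop :=
  coverNumber H = t ∧ ∀ e ∈ H, coverNumber (H.erase e) < t

/-- The Erdős–Gallai number `η(r,t)`: the maximum number of vertices in an `r`-uniform
`t`-critical hypergraph. -/
noncomputable def eta (r t : ℕ) : ℕ :=
  sSup {n : ℕ | ∃ (m : ℕ) (H : Finset (Finset (Fin m))),
    (∀ e ∈ H, e.card = r) ∧ IsCritical t H ∧ (H.biUnion id).card = n}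

/-- The indexed family `F` restricted to `T` has a point in common with tolerance `t`. -/
def TolerantCommonPoint {ι α : Type*} (F : ι → Set α) (S : Finset ι) (t : ℕ) : Prop :=
  ∃ T ⊆ S, S.card - t ≤ T.card ∧ (⋂ i ∈ T, F i).Nonempty


open Finset

noncomputable section

def lex2 (x : Fin 2 → ℝ) : ℝ ×ₗ ℝ := toLex (x 0, x 1)

lemma lex2_inj : Function.Injective lex2 := by
  intro x y h
  unfold lex2 at h
  have h' : ((x 0, x 1) : ℝ × ℝ) = (y 0, y 1) := toLex.injective h
  funext i
  fin_cases i
  · exact congrArg Prod.fst h'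
  · exact congrArg Prod.snd h'

lemma lex2_le_iff (x y : Fin 2 → ℝ) :
    lex2 x ≤ lex2 y ↔ x 0 < y 0 ∨ (x 0 = y 0 ∧ x 1 ≤ y 1) := by
  unfold lex2
  exact Prod.Lex.le_iff

lemma lex2_lt_iff (x y : Fin 2 → ℝ) :
    lex2 x < lex2 y ↔ x 0 < y 0 ∨ (x 0 = y 0 ∧ x 1 < y 1) := by
  unfold lex2
  exact Prod.Lex.lt_iff

lemma finrank_plane : Module.finrank ℝ (Fin 2 → ℝ) = 2 := by
  simp

/-- contrapositive Helly in the plane -/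

lemma helly_plane {ι : Type*} [DecidableEq ι] (F : ι → Set (Fin 2 → ℝ)) (s : Finset ι)
    (hc : ∀ i ∈ s, Convex ℝ (F i)) (h : (⋂ i ∈ s, F i) = ∅) :
    ∃ I ⊆ s, I.card ≤ 3 ∧ (⋂ i ∈ I, F i) = ∅ := by
  by_contra hcon
  push_neg at hcon
  have := Convex.helly_theorem' (𝕜 := ℝ) (F := F) (s := s) hc ?_
  · rw [h] at this; exact Set.not_nonempty_empty this
  · intro I hI hcard
    rcases Set.eq_empty_or_nonempty (⋂ i ∈ I, F i) with he | hne
    · exact absurd (hcon I hI (by rw [finrank_plane] at hcard; omega)) (by simp [he])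
    · exact hne


lemma exists_lexmin {S : Set (Fin 2 → ℝ)} (hS : IsCompact S) (hne : S.Nonempty) :
    ∃ x ∈ S, ∀ y ∈ S, lex2 x ≤ lex2 y := by
  have hcont0 : Continuous (fun x : Fin 2 → ℝ => x 0) := continuous_apply 0
  obtain ⟨z, hzS, hz⟩ := hS.exists_isMinOn hne hcont0.continuousOn
  set S' : Set (Fin 2 → ℝ) := S ∩ {y | y 0 = z 0} with hS'
  have hS'c : IsCompact S' :=
    hS.inter_right ((isClosed_singleton (x := z 0)).preimage hcont0)
  have hS'ne : S'.Nonempty := ⟨z, hzS, rfl⟩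
  have hcont1 : Continuous (fun x : Fin 2 → ℝ => x 1) := continuous_apply 1
  obtain ⟨x, hxS', hx⟩ := hS'c.exists_isMinOn hS'ne hcont1.continuousOn
  refine ⟨x, hxS'.1, fun y hy => ?_⟩
  rw [lex2_le_iff]
  have h0 : x 0 = z 0 := hxS'.2
  have hzy : z 0 ≤ y 0 := hz hy
  rcases lt_or_eq_of_le hzy with h | h
  · left; linarith
  · right
    exact ⟨by linarith, hx (Set.mem_inter hy (by simp only [Set.mem_setOf_eq]; linarith))⟩


lemma convex_lt_lex2 (x : Fin 2 → ℝ) : Convex ℝ {y | lex2 y < lex2 x} := by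
  intro y hy z hz a b ha hb hab
  simp only [Set.mem_setOf_eq, lex2_lt_iff] at hy hz ⊢
  have e0 : (a • y + b • z) 0 = a * y 0 + b * z 0 := by simp
  have e1 : (a • y + b • z) 1 = a * y 1 + b * z 1 := by simp
  rw [e0, e1]
  have hy0 : y 0 ≤ x 0 := by rcases hy with h | h; exacts [h.le, h.1.le]
  have hz0 : z 0 ≤ x 0 := by rcases hz with h | h; exacts [h.le, h.1.le]
  have hid0 : a * x 0 + b * x 0 = x 0 := by linear_combination (x 0) * hab
  have hid1 : a * x 1 + b * x 1 = x 1 := by linear_combination (x 1) * hab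
  have hw0 : a * y 0 + b * z 0 ≤ x 0 := by
    have h1 := mul_le_mul_of_nonneg_left hy0 ha
    have h2 := mul_le_mul_of_nonneg_left hz0 hb
    linarith
  rcases eq_or_lt_of_le hw0 with heq | hlt
  · right
    refine ⟨heq, ?_⟩
    have hA : a = 0 ∨ y 0 = x 0 := by
      by_contra hc
      push_neg at hc
      have h1 : a * y 0 < a * x 0 :=
        mul_lt_mul_of_pos_left (lt_of_le_of_ne hy0 hc.2) (lt_of_le_of_ne ha (Ne.symm hc.1))
      have h2 := mul_le_mul_of_nonneg_left hz0 hb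
      linarith
    have hB : b = 0 ∨ z 0 = x 0 := by
      by_contra hc
      push_neg at hc
      have h1 : b * z 0 < b * x 0 :=
        mul_lt_mul_of_pos_left (lt_of_le_of_ne hz0 hc.2) (lt_of_le_of_ne hb (Ne.symm hc.1))
      have h2 := mul_le_mul_of_nonneg_left hy0 ha
      linarith
    rcases hA with ha0 | hy0x
    · have hb1 : b = 1 := by linarith
      have hz1 : z 1 < x 1 := by
        rcases hz with h | h
        · -- z 0 < x 0 : but then heq fails
          exfalso
          have h2 : b * z 0 < b * x 0 := mul_lt_mul_of_pos_left h (by linarith)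
          rw [ha0, hb1] at heq
          linarith
        · exact h.2
      rw [ha0, hb1]; linarith
    · rcases hB with hb0 | hz0x
      · have ha1 : a = 1 := by linarith
        have hy1 : y 1 < x 1 := by
          rcases hy with h | h
          · exfalso
            have h2 : a * y 0 < a * x 0 := mul_lt_mul_of_pos_left h (by linarith)
            rw [hb0, ha1] at heq
            linarith
          · exact h.2
        rw [ha1, hb0]; linarith
      · have hy1 : y 1 < x 1 := by
          rcases hy with h | h
          · exact absurd hy0x (ne_of_lt h)
          · exact h.2
        have hz1 : z 1 < x 1 := by
          rcases hz with h | h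
          · exact absurd hz0x (ne_of_lt h)
          · exact h.2
        rcases eq_or_lt_of_le ha with ha0 | hapos
        · have hb1 : b = 1 := by linarith
          rw [← ha0, hb1]; linarith
        · have h1 : a * y 1 < a * x 1 := mul_lt_mul_of_pos_left hy1 hapos
          have h2 : b * z 1 ≤ b * x 1 := mul_le_mul_of_nonneg_left hz1.le hb
          linarith
  · exact Or.inl hlt


lemma basis_lemma {A B C : Set (Fin 2 → ℝ)} (hA : Convex ℝ A) (hB : Convex ℝ B)
    (hC : Convex ℝ C) {x : Fin 2 → ℝ} (hx : x ∈ A ∩ B ∩ C)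
    (hmin : ∀ y, y ∈ A ∩ B ∩ C → lex2 x ≤ lex2 y) :
    (∀ y, y ∈ A ∩ B → lex2 x ≤ lex2 y) ∨ (∀ y, y ∈ A ∩ C → lex2 x ≤ lex2 y) ∨
      (∀ y, y ∈ B ∩ C → lex2 x ≤ lex2 y) := by
  classical
  set L : Set (Fin 2 → ℝ) := {y | lex2 y < lex2 x} with hLdef
  set G : Fin 4 → Set (Fin 2 → ℝ) := ![A, B, C, L] with hG
  have hGconv : ∀ i ∈ (univ : Finset (Fin 4)), Convex ℝ (G i) := by
    intro i _
    fin_cases i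
    · exact hA
    · exact hB
    · exact hC
    · exact convex_lt_lex2 x
  have hempty : (⋂ i ∈ (univ : Finset (Fin 4)), G i) = ∅ := by
    apply Set.eq_empty_iff_forall_notMem.mpr
    intro y hy
    have hmem : ∀ i, y ∈ G i := fun i => Set.mem_iInter.mp (Set.mem_iInter.mp hy i) (mem_univ i)
    have h3 : lex2 y < lex2 x := hmem 3
    exact absurd (hmin y ⟨⟨hmem 0, hmem 1⟩, hmem 2⟩) (not_le.mpr h3)
  obtain ⟨I, hIsub, hIcard, hIempty⟩ := helly_plane G univ hGconv hempty
  have key : ∀ c', c' ∉ I → ∀ y, (∀ i : Fin 4, i ≠ c' → y ∈ G i) → False := by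
    intro c' hc'I y hy
    have hyI : y ∈ ⋂ i ∈ I, G i := by
      refine Set.mem_iInter.mpr fun i => Set.mem_iInter.mpr fun hi => ?_
      exact hy i (fun h => hc'I (h ▸ hi))
    rw [hIempty] at hyI
    exact hyI
  have h3I : (3 : Fin 4) ∈ I := by
    by_contra h3
    refine key 3 h3 x fun i hi => ?_
    fin_cases i
    · exact hx.1.1
    · exact hx.1.2
    · exact hx.2
    · exact absurd rfl hi
  have hmiss : ∃ c ∈ ({0, 1, 2} : Finset (Fin 4)), c ∉ I := by
    by_contra hc
    push_neg at hc
    have hsub : ({0, 1, 2, 3} : Finset (Fin 4)) ⊆ I := by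
      intro i hi
      fin_cases hi
      · exact hc 0 (by decide)
      · exact hc 1 (by decide)
      · exact hc 2 (by decide)
      · exact h3I
    have := Finset.card_le_card hsub
    have h4 : ({0, 1, 2, 3} : Finset (Fin 4)).card = 4 := by decide
    omega
  obtain ⟨c, hc, hcI⟩ := hmiss
  fin_cases hc
  · -- A missing : B ∩ C pair
    refine Or.inr (Or.inr fun y hy => ?_)
    by_contra hlt
    refine key 0 hcI y fun i hi => ?_
    fin_cases i
    · exact absurd rfl hi
    · exact hy.1
    · exact hy.2
    · exact not_le.mp hlt
  · refine Or.inr (Or.inl fun y hy => ?_)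
    by_contra hlt
    refine key 1 hcI y fun i hi => ?_
    fin_cases i
    · exact hy.1
    · exact absurd rfl hi
    · exact hy.2
    · exact not_le.mp hlt
  · refine Or.inl fun y hy => ?_
    by_contra hlt
    refine key 2 hcI y fun i hi => ?_
    fin_cases i
    · exact hy.1
    · exact hy.2
    · exact absurd rfl hi
    · exact not_le.mp hlt


lemma colorful_helly {ι : Type*} [DecidableEq ι] (F : ι → Set (Fin 2 → ℝ))
    (hconv : ∀ i, Convex ℝ (F i)) (A B C : Finset ι)
    (hA : A.Nonempty) (hB : B.Nonempty) (hC : C.Nonempty)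
    (h : ∀ a ∈ A, ∀ b ∈ B, ∀ c ∈ C, (F a ∩ F b ∩ F c).Nonempty) :
    (⋂ i ∈ A, F i).Nonempty ∨ (⋂ i ∈ B, F i).Nonempty ∨ (⋂ i ∈ C, F i).Nonempty := by
  classical
  have hpt : ∀ t : ι × ι × ι, ∃ q : Fin 2 → ℝ,
      (t.1 ∈ A → t.2.1 ∈ B → t.2.2 ∈ C → q ∈ F t.1 ∩ F t.2.1 ∩ F t.2.2) := by
    intro t
    by_cases ht : t.1 ∈ A ∧ t.2.1 ∈ B ∧ t.2.2 ∈ C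
    · obtain ⟨q, hq⟩ := h t.1 ht.1 t.2.1 ht.2.1 t.2.2 ht.2.2
      exact ⟨q, fun _ _ _ => hq⟩
    · exact ⟨0, fun h1 h2 h3 => absurd ⟨h1, h2, h3⟩ ht⟩
  choose p hp using hpt
  set G1 : ι → Set (Fin 2 → ℝ) :=
    fun a => convexHull ℝ ((fun bc : ι × ι => p (a, bc)) '' ↑(B ×ˢ C)) with hG1
  set G2 : ι → Set (Fin 2 → ℝ) :=
    fun b => convexHull ℝ ((fun ac : ι × ι => p (ac.1, b, ac.2)) '' ↑(A ×ˢ C)) with hG2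
  set G3 : ι → Set (Fin 2 → ℝ) :=
    fun c => convexHull ℝ ((fun ab : ι × ι => p (ab.1, ab.2, c)) '' ↑(A ×ˢ B)) with hG3
  -- compactness
  have hcpt1 : ∀ a, IsCompact (G1 a) := fun a =>
    (((B ×ˢ C).finite_toSet.image _)).isCompact_convexHull (𝕜 := ℝ)
  have hcpt2 : ∀ b, IsCompact (G2 b) := fun b =>
    (((A ×ˢ C).finite_toSet.image _)).isCompact_convexHull (𝕜 := ℝ)
  have hcpt3 : ∀ c, IsCompact (G3 c) := fun c =>
    (((A ×ˢ B).finite_toSet.image _)).isCompact_convexHull (𝕜 := ℝ)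
  -- inclusions into F
  have hsub1 : ∀ a ∈ A, G1 a ⊆ F a := by
    intro a ha
    apply convexHull_min ?_ (hconv a)
    rintro _ ⟨⟨b, c⟩, hbc, rfl⟩
    rw [mem_coe, mem_product] at hbc
    exact (hp (a, b, c) ha hbc.1 hbc.2).1.1
  have hsub2 : ∀ b ∈ B, G2 b ⊆ F b := by
    intro b hb
    apply convexHull_min ?_ (hconv b)
    rintro _ ⟨⟨a, c⟩, hac, rfl⟩
    rw [mem_coe, mem_product] at hac
    exact (hp (a, b, c) hac.1 hb hac.2).1.2
  have hsub3 : ∀ c ∈ C, G3 c ⊆ F c := by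
    intro c hc
    apply convexHull_min ?_ (hconv c)
    rintro _ ⟨⟨a, b⟩, hab, rfl⟩
    rw [mem_coe, mem_product] at hab
    exact (hp (a, b, c) hab.1 hab.2 hc).2
  -- the witness point lies in all three hulls
  have hmem : ∀ a ∈ A, ∀ b ∈ B, ∀ c ∈ C, p (a, b, c) ∈ G1 a ∩ G2 b ∩ G3 c := by
    intro a ha b hb c hc
    refine ⟨⟨?_, ?_⟩, ?_⟩
    · exact subset_convexHull ℝ _ ⟨(b, c), by simp [ha, hb, hc], rfl⟩
    · exact subset_convexHull ℝ _ ⟨(a, c), by simp [ha, hb, hc], rfl⟩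
    · exact subset_convexHull ℝ _ ⟨(a, b), by simp [ha, hb, hc], rfl⟩
  -- lexmin points of triple intersections
  have hqex : ∀ t : ι × ι × ι, ∃ x : Fin 2 → ℝ,
      (t.1 ∈ A → t.2.1 ∈ B → t.2.2 ∈ C →
        x ∈ G1 t.1 ∩ G2 t.2.1 ∩ G3 t.2.2 ∧
        ∀ y ∈ G1 t.1 ∩ G2 t.2.1 ∩ G3 t.2.2, lex2 x ≤ lex2 y) := by
    rintro ⟨a, b, c⟩
    by_cases ht : a ∈ A ∧ b ∈ B ∧ c ∈ C
    · obtain ⟨ha, hb, hc⟩ := ht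
      have hK : IsCompact (G1 a ∩ G2 b ∩ G3 c) :=
        ((hcpt1 a).inter_right (hcpt2 b).isClosed).inter_right (hcpt3 c).isClosed
      have hKne : (G1 a ∩ G2 b ∩ G3 c).Nonempty := ⟨p (a, b, c), hmem a ha b hb c hc⟩
      obtain ⟨x, hx, hxmin⟩ := exists_lexmin hK hKne
      exact ⟨x, fun _ _ _ => ⟨hx, hxmin⟩⟩
    · exact ⟨0, fun h1 h2 h3 => absurd ⟨h1, h2, h3⟩ ht⟩
  choose q hq using hqex
  -- maximize lexmin over all triples
  have hprodne : (A ×ˢ B ×ˢ C).Nonempty := hA.product (hB.product hC)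
  obtain ⟨t0, ht0mem, ht0max⟩ :=
    Finset.exists_max_image (A ×ˢ B ×ˢ C) (fun t => lex2 (q t)) hprodne
  obtain ⟨a0, b0, c0⟩ := t0
  rw [mem_product] at ht0mem
  obtain ⟨ha0, hbc0⟩ := ht0mem
  rw [mem_product] at hbc0
  obtain ⟨hb0, hc0⟩ := hbc0
  obtain ⟨hx0, hx0min⟩ := hq (a0, b0, c0) ha0 hb0 hc0
  set x := q (a0, b0, c0) with hxdef
  have hbasis := basis_lemma (convex_convexHull ℝ _) (convex_convexHull ℝ _)
    (convex_convexHull ℝ _) hx0 hx0min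
  rcases hbasis with hpair | hpair | hpair
  · -- pair G1 a0, G2 b0 : class C intersects
    refine Or.inr (Or.inr ⟨x, Set.mem_iInter.mpr fun c => Set.mem_iInter.mpr fun hc => ?_⟩)
    obtain ⟨hq', hq'min⟩ := hq (a0, b0, c) ha0 hb0 hc
    have h1 : lex2 x ≤ lex2 (q (a0, b0, c)) := hpair _ hq'.1
    have h2 : lex2 (q (a0, b0, c)) ≤ lex2 x :=
      ht0max (a0, b0, c) (by rw [mem_product]; exact ⟨ha0, by rw [mem_product]; exact ⟨hb0, hc⟩⟩)
    have : q (a0, b0, c) = x := lex2_inj (le_antisymm h2 h1)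
    exact hsub3 c hc (this ▸ hq'.2)
  · -- pair G1 a0, G3 c0 : class B intersects
    refine Or.inr (Or.inl ⟨x, Set.mem_iInter.mpr fun b => Set.mem_iInter.mpr fun hb => ?_⟩)
    obtain ⟨hq', hq'min⟩ := hq (a0, b, c0) ha0 hb hc0
    have h1 : lex2 x ≤ lex2 (q (a0, b, c0)) := hpair _ ⟨hq'.1.1, hq'.2⟩
    have h2 : lex2 (q (a0, b, c0)) ≤ lex2 x :=
      ht0max (a0, b, c0) (by rw [mem_product]; exact ⟨ha0, by rw [mem_product]; exact ⟨hb, hc0⟩⟩)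
    have heq : q (a0, b, c0) = x := lex2_inj (le_antisymm h2 h1)
    exact hsub2 b hb (heq ▸ hq'.1.2)
  · -- pair G2 b0, G3 c0 : class A intersects
    refine Or.inl ⟨x, Set.mem_iInter.mpr fun a => Set.mem_iInter.mpr fun ha => ?_⟩
    obtain ⟨hq', hq'min⟩ := hq (a, b0, c0) ha hb0 hc0
    have h1 : lex2 x ≤ lex2 (q (a, b0, c0)) := hpair _ ⟨hq'.1.2, hq'.2⟩
    have h2 : lex2 (q (a, b0, c0)) ≤ lex2 x :=
      ht0max (a, b0, c0) (by rw [mem_product]; exact ⟨ha, by rw [mem_product]; exact ⟨hb0, hc0⟩⟩)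
    have heq : q (a, b0, c0) = x := lex2_inj (le_antisymm h2 h1)
    exact hsub1 a ha (heq ▸ hq'.1.1)



open Finset

lemma exists_good {n : ℕ} (F : Fin n → Set (Fin 2 → ℝ)) (color : Fin n → Fin 6)
    (g : Fin 6 → Fin n) (hg : ∀ j, color (g j) = j)
    (htcp : TolerantCommonPoint F (Finset.univ.image g) 1) :
    ∃ m : Fin 6, (⋂ j ∈ Finset.univ.erase m, F (g j)).Nonempty := by
  classical
  have hginj : Function.Injective g := fun i j hij => by rw [← hg i, hij, hg j]
  obtain ⟨T, hTsub, hTcard, x, hx⟩ := htcp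
  have hcard6 : (Finset.univ.image g).card = 6 := by
    rw [Finset.card_image_of_injective _ hginj, Finset.card_univ, Fintype.card_fin]
  rw [hcard6] at hTcard
  have hm : ∃ m : Fin 6, ∀ j, j ≠ m → g j ∈ T := by
    by_contra hc
    push_neg at hc
    obtain ⟨j1, _, hj1⟩ := hc 0
    obtain ⟨j2, hj21, hj2⟩ := hc j1
    have hsub : T ⊆ ((Finset.univ.image g).erase (g j1)).erase (g j2) := by
      intro y hy
      rw [mem_erase, mem_erase]
      exact ⟨fun e => hj2 (e ▸ hy), fun e => hj1 (e ▸ hy), hTsub hy⟩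
    have h1 : g j2 ≠ g j1 := fun e => hj21 (hginj e)
    have hc1 : ((Finset.univ.image g).erase (g j1)).card = 5 := by
      rw [Finset.card_erase_of_mem (mem_image_of_mem g (mem_univ j1)), hcard6]
    have hc2 : (((Finset.univ.image g).erase (g j1)).erase (g j2)).card = 4 := by
      rw [Finset.card_erase_of_mem, hc1]
      exact mem_erase.mpr ⟨h1, mem_image_of_mem g (mem_univ j2)⟩
    have := Finset.card_le_card hsub
    omega
  obtain ⟨m, hm⟩ := hm
  refine ⟨m, x, Set.mem_iInter.mpr fun j => Set.mem_iInter.mpr fun hj => ?_⟩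
  have hjT : g j ∈ T := hm j (Finset.mem_erase.mp hj).1
  exact Set.mem_iInter.mp (Set.mem_iInter.mp hx (g j)) hjT

/-- Tolerant colorful Helly in the plane with six colors: let `F` be the disjoint union of
six finite families (color classes) of convex sets in `ℝ²`. If every colorful subfamily
(one set from each color class) has a point in common with tolerance `1`, then some color
class has a point in common with tolerance `1`. -/
theorem tolerant_colorful_helly_plane_six
    (n : ℕ) (F : Fin n → Set (Fin 2 → ℝ)) (color : Fin n → Fin 6)
    (hconv : ∀ i, Convex ℝ (F i))
    (hyp : ∀ g : Fin 6 → Fin n, (∀ j, color (g j) = j) →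
      TolerantCommonPoint F (Finset.univ.image g) 1) :
    ∃ j : Fin 6, TolerantCommonPoint F (Finset.univ.filter fun i => color i = j) 1 := by
  classical
  set S : Fin 6 → Finset (Fin n) := fun j => Finset.univ.filter (fun i => color i = j) with hS
  by_cases hsmall : ∃ j, (S j).card ≤ 1
  · obtain ⟨j, hj⟩ := hsmall
    refine ⟨j, ∅, Finset.empty_subset _, ?_, by simp⟩
    have hj' : (Finset.univ.filter fun i => color i = j).card ≤ 1 := hj
    rw [Finset.card_empty]
    omega
  push_neg at hsmall
  have hSne : ∀ j, (S j).Nonempty := fun j => Finset.card_pos.mp (by have := hsmall j; omega)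
  have hbase : ∀ j : Fin 6, ∃ i, color i = j := by
    intro j
    obtain ⟨i, hi⟩ := hSne j
    exact ⟨i, (Finset.mem_filter.mp hi).2⟩
  choose base hbasec using hbase
  have hmemS : ∀ (i : Fin n) (j : Fin 6), i ∈ S j ↔ color i = j := by
    intro i j
    rw [hS]
    simp [Finset.mem_filter]
  have conclude : ∀ c1 c2 c3 : Fin 6, c1 ≠ c2 → c1 ≠ c3 → c2 ≠ c3 →
      (∀ a ∈ S c1, ∀ b ∈ S c2, ∀ c ∈ S c3, (F a ∩ F b ∩ F c).Nonempty) →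
      ∃ j : Fin 6, TolerantCommonPoint F (S j) 1 := by
    intro c1 c2 c3 _ _ _ hrb
    rcases colorful_helly F hconv (S c1) (S c2) (S c3) (hSne c1) (hSne c2) (hSne c3) hrb
      with h | h | h
    · exact ⟨c1, S c1, Finset.Subset.refl _, by omega, h⟩
    · exact ⟨c2, S c2, Finset.Subset.refl _, by omega, h⟩
    · exact ⟨c3, S c3, Finset.Subset.refl _, by omega, h⟩
  by_cases hE : ∃ (k : Fin 6) (σ : Fin 6 → Fin n), (∀ j, color (σ j) = j) ∧
      (⋂ j ∈ Finset.univ.erase k, F (σ j)) = ∅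
  · obtain ⟨k, σ, hσc, hσe⟩ := hE
    obtain ⟨Bc, hBsub, hBcard, hBempty⟩ := helly_plane (fun j => F (σ j)) (Finset.univ.erase k)
      (fun j _ => hconv _) hσe
    have hall : ∀ h : Fin 6 → Fin n, (∀ j, color (h j) = j) →
        (⋂ j ∈ Bcᶜ, F (h j)).Nonempty := by
      intro h hc
      set g : Fin 6 → Fin n := fun j => if j ∈ Bc then σ j else h j with hg
      have hgc : ∀ j, color (g j) = j := by
        intro j
        rw [hg]
        by_cases hj : j ∈ Bc <;> simp [hj, hσc, hc]
      obtain ⟨m, x, hx⟩ := exists_good F color g hgc (hyp g hgc)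
      by_cases hmB : m ∈ Bc
      · refine ⟨x, Set.mem_iInter.mpr fun j => Set.mem_iInter.mpr fun hj => ?_⟩
        have hjB : j ∉ Bc := Finset.mem_compl.mp hj
        have hjm : j ≠ m := fun e => hjB (e ▸ hmB)
        have hxj := Set.mem_iInter.mp (Set.mem_iInter.mp hx j)
          (Finset.mem_erase.mpr ⟨hjm, Finset.mem_univ j⟩)
        simpa [hg, hjB] using hxj
      · exfalso
        have hxB : x ∈ ⋂ j ∈ Bc, F (σ j) := by
          refine Set.mem_iInter.mpr fun j => Set.mem_iInter.mpr fun hj => ?_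
          have hjm : j ≠ m := fun e => hmB (e ▸ hj)
          have hxj := Set.mem_iInter.mp (Set.mem_iInter.mp hx j)
            (Finset.mem_erase.mpr ⟨hjm, Finset.mem_univ j⟩)
          simpa [hg, hj] using hxj
        rw [hBempty] at hxB
        exact hxB
    have hccard : 3 ≤ Bcᶜ.card := by
      rw [Finset.card_compl]
      simp only [Fintype.card_fin]
      omega
    obtain ⟨t, htsub, htcard⟩ := Finset.exists_subset_card_eq hccard
    obtain ⟨c1, c2, c3, h12, h13, h23, ht⟩ := Finset.card_eq_three.mp htcard
    have hc1B : c1 ∈ Bcᶜ := htsub (by rw [ht]; simp)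
    have hc2B : c2 ∈ Bcᶜ := htsub (by rw [ht]; simp)
    have hc3B : c3 ∈ Bcᶜ := htsub (by rw [ht]; simp)
    refine conclude c1 c2 c3 h12 h13 h23 ?_
    intro a ha b hb c hc
    set h : Fin 6 → Fin n := fun j =>
      if j = c1 then a else if j = c2 then b else if j = c3 then c else base j with hhdef
    have hhc : ∀ j, color (h j) = j := by
      intro j
      rw [hhdef]
      by_cases h1 : j = c1
      · simp [h1, (hmemS a c1).mp ha]
      by_cases h2 : j = c2
      · simp [h2, Ne.symm h12, (hmemS b c2).mp hb]
      by_cases h3 : j = c3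
      · simp [h3, Ne.symm h13, Ne.symm h23, (hmemS c c3).mp hc]
      · simp [h1, h2, h3, hbasec]
    obtain ⟨x, hx⟩ := hall h hhc
    have hget : ∀ j ∈ Bcᶜ, x ∈ F (h j) :=
      fun j hj => Set.mem_iInter.mp (Set.mem_iInter.mp hx j) hj
    have hxa : x ∈ F a := by have := hget c1 hc1B; simpa [hhdef] using this
    have hxb : x ∈ F b := by have := hget c2 hc2B; simpa [hhdef, Ne.symm h12] using this
    have hxc : x ∈ F c := by
      have := hget c3 hc3B
      simpa [hhdef, Ne.symm h13, Ne.symm h23] using this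
    exact ⟨x, ⟨hxa, hxb⟩, hxc⟩
  · push_neg at hE
    refine conclude 1 2 3 (by decide) (by decide) (by decide) ?_
    intro a ha b hb c hc
    set h : Fin 6 → Fin n := fun j =>
      if j = 1 then a else if j = 2 then b else if j = 3 then c else base j with hhdef
    have hhc : ∀ j, color (h j) = j := by
      intro j
      rw [hhdef]
      by_cases h1 : j = 1
      · simp [h1, (hmemS a 1).mp ha]
      by_cases h2 : j = 2
      · simp [h2, (by decide : (2 : Fin 6) ≠ 1), (hmemS b 2).mp hb]
      by_cases h3 : j = 3
      · simp [h3, (by decide : (3 : Fin 6) ≠ 1), (by decide : (3 : Fin 6) ≠ 2),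
          (hmemS c 3).mp hc]
      · simp [h1, h2, h3, hbasec]
    obtain ⟨x, hx⟩ := hE 0 h hhc
    have hget : ∀ j : Fin 6, j ≠ 0 → x ∈ F (h j) := fun j hj =>
      Set.mem_iInter.mp (Set.mem_iInter.mp hx j) (Finset.mem_erase.mpr ⟨hj, Finset.mem_univ j⟩)
    have hxa : x ∈ F a := by have := hget 1 (by decide); simpa [hhdef] using this
    have hxb : x ∈ F b := by have := hget 2 (by decide); simpa [hhdef] using this
    have hxc : x ∈ F c := by have := hget 3 (by decide); simpa [hhdef] using this
    exact ⟨x, ⟨hxa, hxb⟩, hxc⟩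
end
end

section
/- Let F be a finite family of convex sets in ℝ^d and let t ≥ 0 be an integer. If every subfamily F' ⊆ F of size at most η(d+1,t+1) has a point in common with tolerance t, then F has a point in common with tolerance t. -/
/-! ### Auxiliary lemmas about covers and covering numbers -/

lemma coverNumber_le {α : Type*} [DecidableEq α] {H : Finset (Finset α)} {C : Finset α}
    (h : IsCover H C) : coverNumber H ≤ C.card :=
  Nat.sInf_le ⟨C, rfl, h⟩

lemma exists_cover_card_eq' {α : Type*} [DecidableEq α] {H : Finset (Finset α)}
    (h : ∃ C, IsCover H C) :
    ∃ C : Finset α, C.card = coverNumber H ∧ IsCover H C := by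
  obtain ⟨C, hC⟩ := h
  have hne : {k : ℕ | ∃ C : Finset α, C.card = k ∧ IsCover H C}.Nonempty := ⟨C.card, C, rfl, hC⟩
  exact Nat.sInf_mem hne

lemma exists_cover_of_nonempty_edges {α : Type*} [DecidableEq α] {H : Finset (Finset α)}
    (h : ∀ e ∈ H, e.Nonempty) : ∃ C, IsCover H C := by
  refine ⟨H.biUnion id, fun e he => ?_⟩
  obtain ⟨v, hv⟩ := h e he
  exact ⟨v, Finset.mem_inter.2 ⟨hv, Finset.mem_biUnion.2 ⟨e, he, hv⟩⟩⟩

lemma coverNumber_empty {α : Type*} [DecidableEq α] :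
    coverNumber (∅ : Finset (Finset α)) = 0 :=
  Nat.le_zero.mp (coverNumber_le (C := ∅) (fun e he => absurd he (Finset.notMem_empty e)))

/-- Minimal subset with a given property. -/
lemma exists_minimal_subset {X : Type*} [DecidableEq X] (P : Finset X → Prop)
    {s : Finset X} (hs : P s) : ∃ e ⊆ s, P e ∧ ∀ e' ⊂ e, ¬ P e' := by
  classical
  induction s using Finset.strongInductionOn with
  | _ s ih =>
    by_cases h : ∃ e' ⊂ s, P e'
    · obtain ⟨e', he's, he'⟩ := h
      obtain ⟨e, hes, he, hmin⟩ := ih e' he's he'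
      exact ⟨e, hes.trans he's.subset, he, hmin⟩
    · exact ⟨s, subset_rfl, hs, fun e' h' hP => h ⟨e', h', hP⟩⟩

/-! ### A Bollobás-type bound for cross-intersecting set-pair families -/

/-- Bound function for cross-intersecting set-pair families. -/
def Npair : ℕ → ℕ → ℕ
  | 0, _ => 1
  | (a+1), b => 1 + b * Npair a b

lemma setpair_bound {ι α : Type*} [DecidableEq ι] [DecidableEq α] :
    ∀ (a : ℕ) (b : ℕ) (I : Finset ι) (A B : ι → Finset α),
    (∀ i ∈ I, (A i).card ≤ a) → (∀ i ∈ I, (B i).card ≤ b) →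
    (∀ i ∈ I, A i ∩ B i = ∅) →
    (∀ i ∈ I, ∀ j ∈ I, i ≠ j → (A i ∩ B j).Nonempty) →
    I.card ≤ Npair a b := by
  intro a
  induction a with
  | zero =>
    intro b I A B hA hB hd hc
    rw [Npair]
    by_contra h
    push_neg at h
    obtain ⟨i, hi, j, hj, hij⟩ := Finset.one_lt_card.mp h
    obtain ⟨x, hx⟩ := hc i hi j hj hij
    have : (A i).card = 0 := Nat.le_zero.mp (hA i hi)
    rw [Finset.card_eq_zero] at this
    rw [this] at hx
    simp at hx
  | succ a ih =>
    intro b I A B hA hB hd hc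
    rcases I.eq_empty_or_nonempty with rfl | ⟨i₀, hi₀⟩
    · simp [Npair]
    have hsub : I.erase i₀ ⊆ (B i₀).biUnion (fun x => I.filter (fun j => x ∈ A j)) := by
      intro j hj
      obtain ⟨x, hx⟩ := hc j (Finset.mem_of_mem_erase hj) i₀ hi₀ (Finset.ne_of_mem_erase hj)
      rw [Finset.mem_inter] at hx
      exact Finset.mem_biUnion.2 ⟨x, hx.2, Finset.mem_filter.2 ⟨Finset.mem_of_mem_erase hj, hx.1⟩⟩
    have hfil : ∀ x : α, (I.filter (fun j => x ∈ A j)).card ≤ Npair a b := by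
      intro x
      apply ih b _ (fun i => A i \ {x}) B
      · intro i hi
        rw [Finset.mem_filter] at hi
        have := Finset.card_sdiff_add_card_eq_card (Finset.singleton_subset_iff.mpr hi.2)
        have h2 := hA i hi.1
        simp only [Finset.card_singleton] at this
        omega
      · exact fun i hi => hB i (Finset.mem_filter.mp hi).1
      · intro i hi
        have := hd i (Finset.mem_filter.mp hi).1
        rw [← Finset.subset_empty, ← this]
        exact Finset.inter_subset_inter (Finset.sdiff_subset) le_rfl
      · intro i hi j hj hij
        rw [Finset.mem_filter] at hi hj
        obtain ⟨y, hy⟩ := hc i hi.1 j hj.1 hij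
        rw [Finset.mem_inter] at hy
        refine ⟨y, Finset.mem_inter.2 ⟨Finset.mem_sdiff.2 ⟨hy.1, ?_⟩, hy.2⟩⟩
        simp only [Finset.mem_singleton]
        rintro rfl
        have := hd j hj.1
        have : y ∈ A j ∩ B j := Finset.mem_inter.2 ⟨hj.2, hy.2⟩
        simp_all
    have h1 : (I.erase i₀).card ≤ b * Npair a b := by
      calc (I.erase i₀).card ≤ ((B i₀).biUnion (fun x => I.filter (fun j => x ∈ A j))).card :=
            Finset.card_le_card hsub
        _ ≤ ∑ x ∈ B i₀, (I.filter (fun j => x ∈ A j)).card := Finset.card_biUnion_le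
        _ ≤ ∑ _x ∈ B i₀, Npair a b := Finset.sum_le_sum (fun x _ => hfil x)
        _ = (B i₀).card * Npair a b := by rw [Finset.sum_const, smul_eq_mul]
        _ ≤ b * Npair a b := Nat.mul_le_mul_right _ (hB i₀ hi₀)
    have := Finset.card_erase_of_mem hi₀
    rw [Npair]
    omega

/-! ### The Erdős–Gallai-type finiteness bound -/

lemma card_le_of_critical {α : Type*} [DecidableEq α] {r t : ℕ} (hr : 0 < r)
    {H : Finset (Finset α)} (hu : ∀ e ∈ H, e.card = r) (hc : IsCritical t H) :
    (H.biUnion id).card ≤ r * Npair r t := by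
  classical
  have hne : ∀ e ∈ H, e.Nonempty := fun e he =>
    Finset.card_pos.mp (by rw [hu e he]; exact hr)
  have hBex : ∀ e ∈ H, ∃ C : Finset α, C.card ≤ t ∧ IsCover (H.erase e) C ∧ e ∩ C = ∅ := by
    intro e he
    obtain ⟨C, hCcard, hCcov⟩ := exists_cover_card_eq'
      (exists_cover_of_nonempty_edges (fun f hf => hne f (Finset.mem_of_mem_erase hf)))
    refine ⟨C, ?_, hCcov, ?_⟩
    · rw [hCcard]; exact le_of_lt (hc.2 e he)
    · by_contra h
      have hcov : IsCover H C := by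
        intro f hf
        by_cases hfe : f = e
        · subst hfe
          exact Finset.nonempty_iff_ne_empty.mpr h
        · exact hCcov f (Finset.mem_erase.2 ⟨hfe, hf⟩)
      have h1 := coverNumber_le hcov
      rw [hCcard] at h1
      have h2 := hc.2 e he
      rw [hc.1] at h1
      omega
  choose! B hB1 hB2 hB3 using hBex
  have hcardH : H.card ≤ Npair r t := by
    apply setpair_bound r t H id B
    · exact fun e he => le_of_eq (hu e he)
    · exact hB1
    · exact hB3
    · intro e he f hf hef
      exact hB2 f hf e (Finset.mem_erase.2 ⟨hef, he⟩)
  calc (H.biUnion id).card ≤ ∑ e ∈ H, (id e).card := Finset.card_biUnion_le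
    _ = ∑ _e ∈ H, r := Finset.sum_congr rfl (fun e he => hu e he)
    _ = H.card * r := by rw [Finset.sum_const, smul_eq_mul]
    _ ≤ Npair r t * r := Nat.mul_le_mul_right _ hcardH
    _ = r * Npair r t := Nat.mul_comm _ _

lemma eta_set_bddAbove (r t : ℕ) (hr : 0 < r) :
    BddAbove {n : ℕ | ∃ (m : ℕ) (H : Finset (Finset (Fin m))),
      (∀ e ∈ H, e.card = r) ∧ IsCritical t H ∧ (H.biUnion id).card = n} := by
  refine ⟨r * Npair r t, fun n hn => ?_⟩
  obtain ⟨m, H, hu, hc, hcard⟩ := hn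
  rw [← hcard]
  exact card_le_of_critical hr hu hc

/-! ### Transferring covering numbers along maps of hypergraphs -/

lemma coverNumber_image_eq {α β : Type*} [DecidableEq α] [DecidableEq β]
    (p : Finset α → Finset β) (H : Finset (Finset α))
    (fwd : ∀ C, IsCover H C → ∃ C' : Finset β, C'.card ≤ C.card ∧ IsCover (H.image p) C')
    (bwd : ∀ C' : Finset β, IsCover (H.image p) C' → ∃ C, C.card ≤ C'.card ∧ IsCover H C)
    (hex : ∃ C, IsCover H C) :
    coverNumber (H.image p) = coverNumber H := by
  obtain ⟨C, hCcard, hCcov⟩ := exists_cover_card_eq' hex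
  obtain ⟨C', h1, h2⟩ := fwd C hCcov
  have hle : coverNumber (H.image p) ≤ coverNumber H :=
    le_trans (coverNumber_le h2) (hCcard ▸ h1)
  have hex' : ∃ C' : Finset β, IsCover (H.image p) C' := ⟨C', h2⟩
  obtain ⟨D', hD'card, hD'cov⟩ := exists_cover_card_eq' hex'
  obtain ⟨D, g1, g2⟩ := bwd D' hD'cov
  have hge : coverNumber H ≤ coverNumber (H.image p) :=
    le_trans (coverNumber_le g2) (hD'card ▸ g1)
  omega

/-! ### Padding a hypergraph to make it uniform -/

def padT (n d : ℕ) : Type := (Fin n) ⊕ ((Finset (Fin n)) × Fin (d+1))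

instance (n d : ℕ) : DecidableEq (padT n d) := by unfold padT; infer_instance
instance (n d : ℕ) : Fintype (padT n d) := by unfold padT; infer_instance

def dummies (n d : ℕ) (e : Finset (Fin n)) : Finset (Fin (d+1)) :=
  (Finset.range (d+1-e.card)).attachFin
    (fun m hm => lt_of_lt_of_le (Finset.mem_range.mp hm) (Nat.sub_le _ _))

lemma card_dummies (n d : ℕ) (e : Finset (Fin n)) : (dummies n d e).card = d + 1 - e.card := by
  rw [dummies, Finset.card_attachFin, Finset.card_range]

def inlEmb (n d : ℕ) : Fin n ↪ padT n d := ⟨Sum.inl, Sum.inl_injective⟩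

def inrEmb (n d : ℕ) (e : Finset (Fin n)) : Fin (d+1) ↪ padT n d :=
  ⟨fun j => Sum.inr (e, j), fun _ _ h => congrArg Prod.snd (Sum.inr.inj h)⟩

def pad (n d : ℕ) (e : Finset (Fin n)) : Finset (padT n d) :=
  e.map (inlEmb n d) ∪ (dummies n d e).map (inrEmb n d e)

lemma mem_pad_inl {n d : ℕ} {e : Finset (Fin n)} {v : Fin n} :
    Sum.inl v ∈ pad n d e ↔ v ∈ e := by
  rw [pad]
  erw [Finset.mem_union, Finset.mem_map, Finset.mem_map]
  simp only [inlEmb, inrEmb, Function.Embedding.coeFn_mk]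
  constructor
  · rintro (⟨a, ha, h⟩ | ⟨j, hj, h⟩)
    · cases Sum.inl.inj h; exact ha
    · exact absurd h (by simp)
  · intro hv; exact Or.inl ⟨v, hv, rfl⟩

lemma mem_pad_inr {n d : ℕ} {e f : Finset (Fin n)} {j : Fin (d+1)} :
    Sum.inr (f, j) ∈ pad n d e ↔ f = e ∧ j ∈ dummies n d e := by
  rw [pad]
  erw [Finset.mem_union, Finset.mem_map, Finset.mem_map]
  simp only [inlEmb, inrEmb, Function.Embedding.coeFn_mk]
  constructor
  · rintro (⟨v, _, h⟩ | ⟨j', hj', h⟩)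
    · exact absurd h (by simp)
    · have h2 := Sum.inr.inj h
      have he : e = f := congrArg Prod.fst h2
      have hjj : j' = j := congrArg Prod.snd h2
      exact ⟨he.symm, hjj ▸ hj'⟩
  · rintro ⟨rfl, hj⟩
    exact Or.inr ⟨j, hj, rfl⟩

lemma pad_injective (n d : ℕ) : Function.Injective (pad n d) := by
  intro e f h
  ext v
  rw [← mem_pad_inl (d := d), h, mem_pad_inl]

lemma card_pad {n d : ℕ} {e : Finset (Fin n)} (h : e.card ≤ d + 1) :
    (pad n d e).card = d + 1 := by
  rw [pad, Finset.card_union_of_disjoint, Finset.card_map, Finset.card_map, card_dummies]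
  · omega
  · rw [Finset.disjoint_left]
    rintro x hx hx'
    simp only [Finset.mem_map, inlEmb, inrEmb, Function.Embedding.coeFn_mk] at hx hx'
    obtain ⟨v, _, rfl⟩ := hx
    obtain ⟨j, _, hj⟩ := hx'
    exact absurd hj (by simp)

/-! ### The main theorem -/

/-- Tolerant Helly theorem (Montejano–Oliveros): let `F` be a finite family of convex sets in
`ℝ^d`. If every subfamily of size at most `η(d+1,t+1)` has a point in common with tolerance
`t`, then `F` has a point in common with tolerance `t`. -/
theorem tolerant_helly
    (d t n : ℕ) (F : Fin n → Set (Fin d → ℝ)) (hconv : ∀ i, Convex ℝ (F i))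
    (hyp : ∀ S : Finset (Fin n), S.card ≤ eta (d + 1) (t + 1) →
      TolerantCommonPoint F S t) :
    TolerantCommonPoint F Finset.univ t := by
  classical
  by_contra hno
  -- basic facts
  have hcard_univ : (Finset.univ : Finset (Fin n)).card = n := Finset.card_fin n
  have hnt : t < n := by
    by_contra h
    push_neg at h
    exact hno ⟨∅, Finset.empty_subset _, by rw [hcard_univ]; omega,
      by simp [Set.univ_nonempty]⟩
  have hemp : ∀ T : Finset (Fin n), n - t ≤ T.card → (⋂ i ∈ T, F i) = ∅ := by
    intro T hT
    rcases Set.eq_empty_or_nonempty (⋂ i ∈ T, F i) with h | h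
    · exact h
    · exact absurd ⟨T, Finset.subset_univ T, by rw [hcard_univ]; exact hT, h⟩ hno
  -- the hypergraph of minimal subfamilies with empty intersection
  set M : Finset (Finset (Fin n)) := Finset.univ.powerset.filter
    (fun e => (⋂ i ∈ e, F i) = ∅ ∧ ∀ e' ⊂ e, (⋂ i ∈ e', F i) ≠ ∅) with hMdef
  have hMmem : ∀ e, e ∈ M ↔ ((⋂ i ∈ e, F i) = ∅ ∧ ∀ e' ⊂ e, (⋂ i ∈ e', F i) ≠ ∅) := by
    intro e
    rw [hMdef, Finset.mem_filter, Finset.mem_powerset]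
    exact ⟨fun h => h.2, fun h => ⟨Finset.subset_univ e, h⟩⟩
  have hMempty : ∀ e ∈ M, (⋂ i ∈ e, F i) = ∅ := fun e he => ((hMmem e).mp he).1
  have hMne : ∀ e ∈ M, e.Nonempty := by
    intro e he
    rcases e.eq_empty_or_nonempty with rfl | h
    · have := hMempty ∅ he
      simp at this
    · exact h
  -- Helly: minimal empty subfamilies have at most d+1 members
  have hMcard : ∀ e ∈ M, e.card ≤ d + 1 := by
    intro e he
    by_contra h
    push_neg at h
    have hHelly : (⋂ i ∈ e, F i).Nonempty := by
      apply Convex.helly_theorem' (𝕜 := ℝ) (fun i _ => hconv i)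
      intro I hIe hIcard
      have hrk : Module.finrank ℝ (Fin d → ℝ) = d := Module.finrank_fin_fun ℝ
      rw [hrk] at hIcard
      have hne' : I ≠ e := fun hh => by rw [hh] at hIcard; omega
      have hproper : I ⊂ e := lt_of_le_of_ne hIe hne'
      rcases Set.eq_empty_or_nonempty (⋂ i ∈ I, F i) with hI | hI
      · exact absurd hI (((hMmem e).mp he).2 I hproper)
      · exact hI
    rw [hMempty e he] at hHelly
    exact Set.not_nonempty_empty hHelly
  -- covering number of M is at least t+1
  have hMτ : t + 1 ≤ coverNumber M := by
    by_contra h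
    push_neg at h
    obtain ⟨C, hCcard, hCcov⟩ := exists_cover_card_eq' (exists_cover_of_nonempty_edges hMne)
    have hCt : C.card ≤ t := by omega
    set T := Finset.univ \ C with hTdef
    have hTcard : n - t ≤ T.card := by
      rw [hTdef, Finset.card_sdiff_of_subset (Finset.subset_univ C), hcard_univ]
      omega
    have hTemp := hemp T hTcard
    obtain ⟨e, heT, heP, hemin⟩ :=
      exists_minimal_subset (fun e => (⋂ i ∈ e, F i) = ∅) hTemp
    have heM : e ∈ M := (hMmem e).mpr ⟨heP, fun e' h' => hemin e' h'⟩
    obtain ⟨v, hv⟩ := hCcov e heM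
    rw [Finset.mem_inter] at hv
    have := heT hv.1
    rw [hTdef, Finset.mem_sdiff] at this
    exact this.2 hv.2
  -- extract a minimal subfamily with covering number at least t+1
  obtain ⟨H, hHM, hHτ, hHmin⟩ :=
    exists_minimal_subset (fun K => t + 1 ≤ coverNumber K) hMτ
  have hHne : ∀ e ∈ H, e.Nonempty := fun e he => hMne e (hHM he)
  have hHcard : ∀ e ∈ H, e.card ≤ d + 1 := fun e he => hMcard e (hHM he)
  have hHempty : ∀ e ∈ H, (⋂ i ∈ e, F i) = ∅ := fun e he => hMempty e (hHM he)
  have hHnonempty : H.Nonempty := by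
    rcases H.eq_empty_or_nonempty with rfl | h
    · rw [coverNumber_empty] at hHτ; omega
    · exact h
  have hτerase : ∀ e ∈ H, coverNumber (H.erase e) ≤ t := by
    intro e he
    have h1 := hHmin (H.erase e) (Finset.erase_ssubset he)
    omega
  have hτH : coverNumber H = t + 1 := by
    refine le_antisymm ?_ hHτ
    obtain ⟨e, he⟩ := hHnonempty
    obtain ⟨C, hCcard, hCcov⟩ := exists_cover_card_eq'
      (exists_cover_of_nonempty_edges (fun f hf => hHne f (Finset.mem_of_mem_erase hf)))
    obtain ⟨v, hv⟩ := hHne e he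
    have hcov : IsCover H (insert v C) := by
      intro f hf
      by_cases hfe : f = e
      · subst hfe
        exact ⟨v, Finset.mem_inter.2 ⟨hv, Finset.mem_insert_self v C⟩⟩
      · obtain ⟨w, hw⟩ := hCcov f (Finset.mem_erase.2 ⟨hfe, hf⟩)
        rw [Finset.mem_inter] at hw
        exact ⟨w, Finset.mem_inter.2 ⟨hw.1, Finset.mem_insert_of_mem hw.2⟩⟩
    have h1 := coverNumber_le hcov
    have h2 : (insert v C).card ≤ C.card + 1 := Finset.card_insert_le v C
    have h3 := hτerase e he
    omega
  have hHcrit : IsCritical (t + 1) H := ⟨hτH, fun e he => by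
    have := hτerase e he; omega⟩
  -- pad the hypergraph to a (d+1)-uniform one
  set P : Finset (Finset (padT n d)) := H.image (pad n d) with hPdef
  have hfwd : ∀ (H' : Finset (Finset (Fin n))) (C : Finset (Fin n)), IsCover H' C →
      IsCover (H'.image (pad n d)) (C.map (inlEmb n d)) := by
    intro H' C hC ee hee
    obtain ⟨e, he, rfl⟩ := Finset.mem_image.mp hee
    obtain ⟨v, hv⟩ := hC e he
    rw [Finset.mem_inter] at hv
    exact ⟨Sum.inl v, Finset.mem_inter.2 ⟨mem_pad_inl.mpr hv.1,
      Finset.mem_map.2 ⟨v, hv.2, rfl⟩⟩⟩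
  have hbwd : ∀ (H' : Finset (Finset (Fin n))), H' ⊆ H → ∀ C' : Finset (padT n d),
      IsCover (H'.image (pad n d)) C' →
      ∃ C, C.card ≤ C'.card ∧ IsCover H' C := by
    intro H' hH' C' hC'
    set g : padT n d → Fin n := fun x => match x with
      | .inl v => v
      | .inr (e, _) => if h : e.Nonempty then e.min' h else ⟨0, lt_of_le_of_lt (Nat.zero_le t) hnt⟩
      with hgdef
    refine ⟨C'.image g, Finset.card_image_le, ?_⟩
    intro e he
    obtain ⟨x, hx⟩ := hC' (pad n d e) (Finset.mem_image.2 ⟨e, he, rfl⟩)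
    rw [Finset.mem_inter] at hx
    match x, hx with
    | .inl v, hx =>
      exact ⟨v, Finset.mem_inter.2 ⟨mem_pad_inl.mp hx.1,
        Finset.mem_image.2 ⟨Sum.inl v, hx.2, rfl⟩⟩⟩
    | .inr (f, j), hx =>
      obtain ⟨rfl, _⟩ := mem_pad_inr.mp hx.1
      have hfe : f.Nonempty := hHne f (hH' he)
      refine ⟨f.min' hfe, Finset.mem_inter.2 ⟨f.min'_mem hfe,
        Finset.mem_image.2 ⟨Sum.inr (f, j), hx.2, ?_⟩⟩⟩
      simp [hgdef, dif_pos hfe]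
  have hcov_eq : ∀ H' : Finset (Finset (Fin n)), H' ⊆ H →
      coverNumber (H'.image (pad n d)) = coverNumber H' := by
    intro H' hH'
    apply coverNumber_image_eq
    · intro C hC
      exact ⟨C.map (inlEmb n d), by rw [Finset.card_map], hfwd H' C hC⟩
    · exact hbwd H' hH'
    · exact exists_cover_of_nonempty_edges (fun e he => hHne e (hH' he))
  have hPcrit : IsCritical (t + 1) P := by
    constructor
    · rw [hPdef, hcov_eq H subset_rfl, hτH]
    · intro ee hee
      obtain ⟨e, he, rfl⟩ := Finset.mem_image.mp hee
      rw [hPdef, ← Finset.image_erase (pad_injective n d),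
        hcov_eq (H.erase e) (Finset.erase_subset e H)]
      have := hτerase e he
      omega
  have hPunif : ∀ ee ∈ P, ee.card = d + 1 := by
    intro ee hee
    obtain ⟨e, he, rfl⟩ := Finset.mem_image.mp hee
    exact card_pad (hHcard e he)
  -- transfer to Fin m
  set m := Fintype.card (padT n d) with hmdef
  set φ : padT n d ≃ Fin m := Fintype.equivFin _ with hφdef
  set φe : padT n d ↪ Fin m := ⟨φ, φ.injective⟩ with hφedef
  set ψ : Finset (padT n d) → Finset (Fin m) := fun s => s.map φe with hψdef
  have hψinj : Function.Injective ψ := fun s u h => Finset.map_injective φe h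
  set Q : Finset (Finset (Fin m)) := P.image ψ with hQdef
  have hψcov_eq : ∀ P' : Finset (Finset (padT n d)), (∀ e ∈ P', e.Nonempty) →
      coverNumber (P'.image ψ) = coverNumber P' := by
    intro P' hP'
    apply coverNumber_image_eq
    · intro C hC
      refine ⟨C.map φe, by rw [Finset.card_map], ?_⟩
      intro ee hee
      obtain ⟨e, he, rfl⟩ := Finset.mem_image.mp hee
      obtain ⟨v, hv⟩ := hC e he
      rw [Finset.mem_inter] at hv
      exact ⟨φ v, Finset.mem_inter.2 ⟨Finset.mem_map.2 ⟨v, hv.1, rfl⟩,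
        Finset.mem_map.2 ⟨v, hv.2, rfl⟩⟩⟩
    · intro C' hC'
      refine ⟨C'.image φ.symm, Finset.card_image_le, ?_⟩
      intro e he
      obtain ⟨y, hy⟩ := hC' (ψ e) (Finset.mem_image.2 ⟨e, he, rfl⟩)
      rw [Finset.mem_inter] at hy
      obtain ⟨v, hv, rfl⟩ := Finset.mem_map.mp hy.1
      refine ⟨v, Finset.mem_inter.2 ⟨hv, Finset.mem_image.2 ⟨φe v, hy.2, ?_⟩⟩⟩
      simp [hφedef]
    · exact exists_cover_of_nonempty_edges hP'
  have hPne : ∀ ee ∈ P, ee.Nonempty := fun ee hee =>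
    Finset.card_pos.mp (by rw [hPunif ee hee]; omega)
  have hQcrit : IsCritical (t + 1) Q := by
    constructor
    · rw [hQdef, hψcov_eq P hPne, hPcrit.1]
    · intro ee1 hee1
      obtain ⟨ee, hee, rfl⟩ := Finset.mem_image.mp hee1
      rw [hQdef, ← Finset.image_erase hψinj,
        hψcov_eq (P.erase ee) (fun f hf => hPne f (Finset.mem_of_mem_erase hf))]
      exact hPcrit.2 ee hee
  have hQunif : ∀ ee1 ∈ Q, ee1.card = d + 1 := by
    intro ee1 hee1
    obtain ⟨ee, hee, rfl⟩ := Finset.mem_image.mp hee1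
    rw [hψdef]
    simp only [Finset.card_map]
    exact hPunif ee hee
  -- the vertex count of Q is at most eta
  have hQmem : (Q.biUnion id).card ∈ {n : ℕ | ∃ (m : ℕ) (H : Finset (Finset (Fin m))),
      (∀ e ∈ H, e.card = d + 1) ∧ IsCritical (t + 1) H ∧ (H.biUnion id).card = n} :=
    ⟨m, Q, hQunif, hQcrit, rfl⟩
  have hQeta : (Q.biUnion id).card ≤ eta (d + 1) (t + 1) :=
    le_csSup (eta_set_bddAbove (d + 1) (t + 1) (by omega)) hQmem
  -- the support of H is at most the vertex count of Q
  set S : Finset (Fin n) := H.biUnion id with hSdef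
  have hSP : S.card ≤ (P.biUnion id).card := by
    have hsub : S.map (inlEmb n d) ⊆ P.biUnion id := by
      intro x hx
      obtain ⟨v, hv, rfl⟩ := Finset.mem_map.mp hx
      obtain ⟨e, he, hve⟩ := Finset.mem_biUnion.mp hv
      exact Finset.mem_biUnion.2 ⟨pad n d e, Finset.mem_image.2 ⟨e, he, rfl⟩,
        mem_pad_inl.mpr hve⟩
    calc S.card = (S.map (inlEmb n d)).card := (Finset.card_map _).symm
      _ ≤ (P.biUnion id).card := Finset.card_le_card hsub
  have hPQ : (P.biUnion id).card ≤ (Q.biUnion id).card := by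
    have hsub : (P.biUnion id).map φe ⊆ Q.biUnion id := by
      intro x hx
      obtain ⟨y, hy, rfl⟩ := Finset.mem_map.mp hx
      obtain ⟨ee, hee, hyee⟩ := Finset.mem_biUnion.mp hy
      exact Finset.mem_biUnion.2 ⟨ψ ee, Finset.mem_image.2 ⟨ee, hee, rfl⟩,
        Finset.mem_map.2 ⟨y, hyee, rfl⟩⟩
    calc (P.biUnion id).card = ((P.biUnion id).map φe).card := (Finset.card_map _).symm
      _ ≤ (Q.biUnion id).card := Finset.card_le_card hsub
  have hSeta : S.card ≤ eta (d + 1) (t + 1) := le_trans hSP (le_trans hPQ hQeta)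
  -- apply the hypothesis to the support
  obtain ⟨T, hTS, hTcard, hTne⟩ := hyp S hSeta
  set C := S \ T with hCdef
  have hCcard : C.card ≤ t := by
    rw [hCdef, Finset.card_sdiff_of_subset hTS]
    omega
  have hCcov : IsCover H C := by
    intro e he
    by_contra hni
    rw [Finset.not_nonempty_iff_eq_empty] at hni
    have heS : e ⊆ S := fun v hv => Finset.mem_biUnion.2 ⟨e, he, hv⟩
    have heT : e ⊆ T := by
      intro v hv
      have hvS := heS hv
      by_contra hvT
      have : v ∈ e ∩ C := Finset.mem_inter.2 ⟨hv, Finset.mem_sdiff.2 ⟨hvS, hvT⟩⟩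
      rw [hni] at this
      exact Finset.notMem_empty v this
    obtain ⟨x, hx⟩ := hTne
    have hx' : x ∈ ⋂ i ∈ e, F i := by
      apply Set.mem_biInter
      intro i hi
      simp only [Set.mem_iInter] at hx
      exact hx i (heT hi)
    rw [hHempty e he] at hx'
    exact Set.notMem_empty x hx'
  have hfinal := coverNumber_le hCcov
  rw [hτH] at hfinal
  omega
end
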